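/- arXiv:2307.10548 — 6 statements merged into one kernel-verified Lean document; each statement's English description precedes it below -/
import Mathlib

section
/- If G is a finite simple graph and B is a standard zero forcing set of G, then the terminus of any relaxed chronology of forces F for B (the set of vertices that perform no force in F) is also a standard zero forcing set of G. -/
namespace ZF

variable {V : Type*} [Fintype V] [DecidableEq V]

/-- A valid standard zero forcing force within the vertex set `U`, given blue set `B`:
`u` is blue, `v` is its unique white neighbor in `U`. -/
def ZFValid (G : SimpleGraph V) (U B : Set V) (u v : V) : Prop :=
  u ∈ U ∧ v ∈ U ∧ u ∈ B ∧ v ∉ B ∧ G.Adj u v ∧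
    ∀ w ∈ U, G.Adj u w → w ∉ B → w = v

/-- `whiteConn G U B a b` : `a` and `b` are joined by a walk through white
(non-blue) vertices of `U` (possibly trivial). -/
def whiteConn (G : SimpleGraph V) (U B : Set V) : V → V → Prop :=
  Relation.ReflTransGen (fun a b => G.Adj a b ∧ a ∈ U ∧ b ∈ U ∧ a ∉ B ∧ b ∉ B)

/-- A valid PSD force within the vertex set `U`, given blue set `B`:
`u` is blue and `v` is the unique neighbor of `u` in the component of the
white subgraph containing `v`. -/
def PSDValid (G : SimpleGraph V) (U B : Set V) (u v : V) : Prop :=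
  u ∈ U ∧ v ∈ U ∧ u ∈ B ∧ v ∉ B ∧ G.Adj u v ∧
    ∀ w ∈ U, G.Adj u w → w ∉ B → whiteConn G U B v w → w = v

/-- One propagation step for a generic color change rule `valid`. -/
def step (valid : Set V → V → V → Prop) (B : Set V) : Set V :=
  B ∪ {v | ∃ u, valid B u v}

/-- Iterated propagation. -/
def iter (valid : Set V → V → V → Prop) (B : Set V) : ℕ → Set V :=
  fun k => (step valid)^[k] B

/-- `B ⊆ U` is a forcing set of the induced subgraph on `U` for the rule `valid`. -/
def IsForcingSet (valid : Set V → V → V → Prop) (U B : Set V) : Prop :=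
  B ⊆ U ∧ ∃ k, U ⊆ iter valid B k

/-- Propagation time of the set `B` for rule `valid` on the induced subgraph on `U`. -/
noncomputable def propTime (valid : Set V → V → V → Prop) (U B : Set V) : ℕ :=
  sInf {k | U ⊆ iter valid B k}

/-- Vertices blue after `k` time-steps of the family of forces `F`, starting from `B`. -/
def expand (B : Set V) (F : ℕ → Set (V × V)) : ℕ → Set V
  | 0 => B
  | k + 1 => expand B F k ∪ {v | ∃ u, (u, v) ∈ F (k + 1)}

/-- A relaxed chronology of forces (for the rule `valid`) for the forcing set `B`
on the induced subgraph on `U`, with completion time `K`: at each time-step an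
arbitrary subset of the currently valid forces is performed (no vertex being
forced twice in one step), and all of `U` is blue after step `K`. -/
structure RelaxedChron (valid : Set V → V → V → Prop) (U B : Set V)
    (K : ℕ) (F : ℕ → Set (V × V)) : Prop where
  subset : B ⊆ U
  init : F 0 = ∅
  bound : ∀ k, K < k → F k = ∅
  forcesValid : ∀ k < K, ∀ u v, (u, v) ∈ F (k + 1) → valid (expand B F k) u v
  uniqueForcer : ∀ k u₁ u₂ v, (u₁, v) ∈ F k → (u₂, v) ∈ F k → u₁ = u₂
  complete : U ⊆ expand B F K

/-- The underlying set of forces of a relaxed chronology. -/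
def forcesOf (F : ℕ → Set (V × V)) (K : ℕ) : Set (V × V) :=
  {p | ∃ k, 1 ≤ k ∧ k ≤ K ∧ p ∈ F k}

/-- The terminus of a relaxed chronology: the vertices (of `U`) performing no force. -/
def terminus (U : Set V) (F : ℕ → Set (V × V)) (K : ℕ) : Set V :=
  {v ∈ U | ∀ u, (v, u) ∉ forcesOf F K}

/-- The reversal of a relaxed chronology: each force is reversed and
the order of the time-steps is reversed. -/
def revChron (F : ℕ → Set (V × V)) (K : ℕ) : ℕ → Set (V × V) :=
  fun k => if 1 ≤ k ∧ k ≤ K then {p | (p.2, p.1) ∈ F (K - k + 1)} else ∅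

/-- One round of performing all currently valid forces from the set of forces `S`. -/
def forceStep (valid : Set V → V → V → Prop) (S : Set (V × V)) (B : Set V) : Set V :=
  B ∪ {v | ∃ u, (u, v) ∈ S ∧ valid B u v}

def forceIter (valid : Set V → V → V → Prop) (S : Set (V × V)) (B : Set V) : ℕ → Set V :=
  fun t => (forceStep valid S)^[t] B

/-- Propagation time of a set of forces `S` for starting set `B` on `U`. -/
noncomputable def ptForces (valid : Set V → V → V → Prop) (U : Set V)
    (S : Set (V × V)) (B : Set V) : ℕ :=
  sInf {t | U ⊆ forceIter valid S B t}

/-- `v` is active at time-step `k` of the relaxed chronology `F`: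
it is blue after step `k` and has not yet performed a force. -/
def activeAt (B : Set V) (F : ℕ → Set (V × V)) (v : V) (k : ℕ) : Prop :=
  v ∈ expand B F k ∧ ∀ j ≤ k, ∀ u, (v, u) ∉ F j

/-- The zero forcing number. -/
noncomputable def Z (G : SimpleGraph V) : ℕ :=
  sInf {n | ∃ B : Set V, B.ncard = n ∧ IsForcingSet (ZFValid G Set.univ) Set.univ B}

/-- The PSD forcing number. -/
noncomputable def Zplus (G : SimpleGraph V) : ℕ :=
  sInf {n | ∃ B : Set V, B.ncard = n ∧ IsForcingSet (PSDValid G Set.univ) Set.univ B}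

/-- Standard `m`-propagation time `pt(G,m)`. -/
noncomputable def ptm (G : SimpleGraph V) (m : ℕ) : ℕ :=
  sInf {t | ∃ B : Set V, B.ncard = m ∧ IsForcingSet (ZFValid G Set.univ) Set.univ B ∧
    propTime (ZFValid G Set.univ) Set.univ B = t}

/-- PSD `m`-propagation time `pt₊(G,m)`. -/
noncomputable def ptplusm (G : SimpleGraph V) (m : ℕ) : ℕ :=
  sInf {t | ∃ B : Set V, B.ncard = m ∧ IsForcingSet (PSDValid G Set.univ) Set.univ B ∧
    propTime (PSDValid G Set.univ) Set.univ B = t}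

/-- Standard propagation time `pt(G)`. -/
noncomputable def pt (G : SimpleGraph V) : ℕ := ptm G (Z G)

/-- PSD propagation time `pt₊(G)`. -/
noncomputable def ptplus (G : SimpleGraph V) : ℕ := ptplusm G (Zplus G)

/-- PSD throttling number `thr₊(G)`. -/
noncomputable def thrplus (G : SimpleGraph V) : ℕ :=
  sInf {t | ∃ B : Set V, IsForcingSet (PSDValid G Set.univ) Set.univ B ∧
    t = B.ncard + propTime (PSDValid G Set.univ) Set.univ B}

/-- Closed neighborhood of a set. -/
def closedNbhd (G : SimpleGraph V) (B : Set V) : Set V :=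
  B ∪ {v | ∃ u ∈ B, G.Adj u v}

/-- Power domination process: the first step colors the closed neighborhood,
subsequent steps apply the standard zero forcing rule. -/
def pdIter (G : SimpleGraph V) (B : Set V) : ℕ → Set V
  | 0 => B
  | 1 => closedNbhd G B
  | (k + 2) => step (ZFValid G Set.univ) (pdIter G B (k + 1))

/-- `B` is a power dominating set. -/
def IsPDSet (G : SimpleGraph V) (B : Set V) : Prop :=
  ∃ k, Set.univ ⊆ pdIter G B k

/-- Power propagation time of a set. -/
noncomputable def pdPropTime (G : SimpleGraph V) (B : Set V) : ℕ :=
  sInf {k | Set.univ ⊆ pdIter G B k}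

/-- Power `m`-propagation time `ppt(G,m)`. -/
noncomputable def pptm (G : SimpleGraph V) (m : ℕ) : ℕ :=
  sInf {t | ∃ B : Set V, B.ncard = m ∧ IsPDSet G B ∧ pdPropTime G B = t}

/-- Restriction of a family of forces to those with both endpoints in `W`. -/
def restrictF (F : ℕ → Set (V × V)) (W : Set V) : ℕ → Set (V × V) :=
  fun k => {p ∈ F k | p.1 ∈ W ∧ p.2 ∈ W}

/-- The forcing tree of `b` : all vertices reachable from `b` by a chain of forces in `S`. -/
def treeOf (S : Set (V × V)) (b : V) : Set V :=
  {w | Relation.ReflTransGen (fun a c => (a, c) ∈ S) b w}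

open Classical in
/-- The endpoint, after `k` steps, of the path grown from `b ∈ B` in the
path bundle of the relaxed chronology `F` induced by the vertex `x`: the path is
extended by a force from its current endpoint into the component of white
vertices containing `x`, whenever such a force occurs. -/
noncomputable def lastVert (G : SimpleGraph V) (B : Set V) (F : ℕ → Set (V × V))
    (x : V) (b : V) : ℕ → V
  | 0 => b
  | k + 1 =>
    if h : ∃ w, (lastVert G B F x b k, w) ∈ F (k + 1) ∧ x ∉ expand B F k ∧
        whiteConn G Set.univ (expand B F k) x w
    then h.choose else lastVert G B F x b k

/-- The vertex set of the path bundle of `F` induced by `x`. -/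
def bundle (G : SimpleGraph V) (B : Set V) (F : ℕ → Set (V × V)) (x : V) (K : ℕ) : Set V :=
  {v | ∃ b ∈ B, ∃ j ≤ K, lastVert G B F x b j = v}

/-- The path of the bundle grown from `b`, as a list of vertices. -/
noncomputable def bundlePath (G : SimpleGraph V) (B : Set V) (F : ℕ → Set (V × V))
    (x : V) (K : ℕ) (b : V) : List V :=
  ((List.range (K + 1)).map (lastVert G B F x b)).dedup

/-- A nonempty path in `G`, given as a list of distinct consecutively adjacent vertices. -/
def IsPathList (G : SimpleGraph V) (l : List V) : Prop :=
  l ≠ [] ∧ l.Nodup ∧ l.Chain' G.Adj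

/-- `P` is an `(α,β)`-linkage: a collection of pairwise vertex-disjoint paths,
`α` consisting of one endpoint of each path and `β` of the other endpoints. -/
def IsLinkage (G : SimpleGraph V) (α β : Set V) (P : Set (List V)) : Prop :=
  (∀ l ∈ P, IsPathList G l) ∧
  (∀ l ∈ P, ∀ l' ∈ P, l ≠ l' → ∀ v, v ∈ l → v ∉ l') ∧
  (∀ l ∈ P, ∀ l' ∈ P, l.head? = l'.head? → l = l') ∧
  (∀ l ∈ P, ∀ l' ∈ P, l.getLast? = l'.getLast? → l = l') ∧
  α = {v | ∃ l ∈ P, l.head? = some v} ∧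
  β = {v | ∃ l ∈ P, l.getLast? = some v}

/-- `P` is a rigid linkage: for some `α`, `β` it is the unique `(α,β)`-linkage in `G`. -/
def IsRigidLinkage (G : SimpleGraph V) (P : Set (List V)) : Prop :=
  ∃ α β, IsLinkage G α β P ∧ ∀ P', IsLinkage G α β P' → P' = P

/-- A path cover of `G` : `m` vertex-disjoint induced paths covering all vertices,
the `i`-th path having vertices `vtx i 0, …, vtx i (n i − 1)` in path order. -/
structure IsPathCover (G : SimpleGraph V) (m : ℕ) (n : Fin m → ℕ)
    (vtx : (i : Fin m) → Fin (n i) → V) : Prop where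
  pos : ∀ i, 0 < n i
  inj : Function.Injective (fun p : (i : Fin m) × Fin (n i) => vtx p.1 p.2)
  cover : ∀ v : V, ∃ i j, vtx i j = v
  induced : ∀ i (j j' : Fin (n i)),
    G.Adj (vtx i j) (vtx i j') ↔ ((j : ℕ) + 1 = (j' : ℕ) ∨ (j' : ℕ) + 1 = (j : ℕ))

/-- A witness that a path cover is a parallel increasing path cover: a collection of
block partitions of `{0,…,K}`, one per path, compatible with the edges of `G`. -/
structure IsPIPWitness (G : SimpleGraph V) (m : ℕ) (n : Fin m → ℕ)
    (vtx : (i : Fin m) → Fin (n i) → V) (K : ℕ)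
    (A : (i : Fin m) → Fin (n i) → Finset ℕ) : Prop where
  mem : ∀ i j, A i j ⊆ Finset.range (K + 1)
  nonempty : ∀ i j, (A i j).Nonempty
  partition : ∀ i, ∀ x ∈ Finset.range (K + 1), ∃! j, x ∈ A i j
  mono : ∀ i (j j' : Fin (n i)), (j : ℕ) < (j' : ℕ) → ∀ x ∈ A i j, ∀ y ∈ A i j', x < y
  edge : ∀ (i i' : Fin m) j j', i ≠ i' →
    G.Adj (vtx i j) (vtx i' j') → ((A i j) ∩ (A i' j')).Nonempty

/-- A parallel increasing path cover of `G`. -/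
def IsPIP (G : SimpleGraph V) (m : ℕ) (n : Fin m → ℕ)
    (vtx : (i : Fin m) → Fin (n i) → V) : Prop :=
  IsPathCover G m n vtx ∧ ∃ K A, IsPIPWitness G m n vtx K A

/-- The path cover given by `vtx` is the chain set of the family of forces `F` :
the underlying forces are exactly the consecutive pairs along the paths. -/
def IsChainSetOf (m : ℕ) (n : Fin m → ℕ) (vtx : (i : Fin m) → Fin (n i) → V)
    (F : ℕ → Set (V × V)) (K : ℕ) : Prop :=
  ∀ u w, (u, w) ∈ forcesOf F K ↔
    ∃ (i : Fin m) (j : Fin (n i)) (j' : Fin (n i)),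
      u = vtx i j ∧ w = vtx i j' ∧ (j : ℕ) + 1 = (j' : ℕ)

end ZF
/-- If `B` is a standard zero forcing set of a finite simple graph `G`, then the terminus of
any relaxed chronology of forces `F` for `B` is also a standard zero forcing set of `G`. -/
theorem terminus_isZeroForcingSet {V : Type*} [Fintype V] [DecidableEq V]
    (G : SimpleGraph V) (B : Set V) (K : ℕ) (F : ℕ → Set (V × V))
    (hB : ZF.IsForcingSet (ZF.ZFValid G Set.univ) Set.univ B)
    (hF : ZF.RelaxedChron (ZF.ZFValid G Set.univ) Set.univ B K F) :
    ZF.IsForcingSet (ZF.ZFValid G Set.univ) Set.univ (ZF.terminus Set.univ F K) := by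
  classical
  set valid := ZF.ZFValid G Set.univ with hvalid
  set T := ZF.terminus Set.univ F K with hT
  -- monotonicity of `expand` in time
  have hmono : ∀ j k : ℕ, j ≤ k → ZF.expand B F j ⊆ ZF.expand B F k := by
    intro j k hjk
    induction k with
    | zero => simpa [Nat.le_zero.mp hjk] using subset_rfl
    | succ k ih =>
      rcases Nat.lt_or_ge j (k+1) with h | h
      · exact (ih (Nat.lt_succ_iff.mp h)).trans (by
          intro x hx; exact Or.inl hx)
      · have : j = k + 1 := le_antisymm hjk h
        simp [this]
  -- a force (u,z) ∈ F j (with 1 ≤ j) gives all ZFValid data at time j-1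
  have hforce : ∀ j : ℕ, ∀ u z : V, (u, z) ∈ F j → 1 ≤ j →
      valid (ZF.expand B F (j - 1)) u z := by
    intro j u z hjz hj1
    have hjK : j ≤ K := by
      by_contra h
      rw [hF.bound j (by omega)] at hjz
      exact hjz
    obtain ⟨m, rfl⟩ : ∃ m, j = m + 1 := ⟨j - 1, by omega⟩
    have hmK : m < K := by omega
    simpa using hF.forcesValid m hmK u z hjz
  -- targets become blue at the time they are forced
  have htarget : ∀ j : ℕ, ∀ u z : V, (u, z) ∈ F j → 1 ≤ j → z ∈ ZF.expand B F j := by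
    intro j u z hjz hj1
    obtain ⟨m, rfl⟩ : ∃ m, j = m + 1 := ⟨j - 1, by omega⟩
    exact Or.inr ⟨u, hjz⟩
  -- the key induction: any vertex performing no force at time-steps ≤ K - k
  -- is blue after k rounds of the reversed process started from T
  have key : ∀ k : ℕ, ∀ u : V, (∀ j, j ≤ K - k → ∀ z, (u, z) ∉ F j) →
      u ∈ ZF.iter valid T k := by
    intro k
    induction k with
    | zero =>
      intro u hu
      refine ⟨Set.mem_univ u, fun w hw => ?_⟩
      obtain ⟨j, hj1, hjK, hjw⟩ := hw
      exact hu j (by omega) w hjw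
    | succ k ih =>
      intro u hu
      have hiter : ZF.iter valid T (k + 1) = ZF.step valid (ZF.iter valid T k) :=
        Function.iterate_succ_apply' _ _ _
      by_cases hcase : ∀ j, j ≤ K - k → ∀ z, (u, z) ∉ F j
      · rw [hiter]; exact Or.inl (ih u hcase)
      · push_neg at hcase
        obtain ⟨j, hj, z, hjz⟩ := hcase
        have hj1 : 1 ≤ j := by
          rcases Nat.eq_zero_or_pos j with h | h
          · rw [h, hF.init] at hjz; exact absurd hjz (Set.notMem_empty _)
          · exact h
        have hjgt : ¬ (j ≤ K - (k + 1)) := fun h => hu j h z hjz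
        have hjeq : j = K - k := by omega
        have hkK : k < K := by omega
        have hv := hforce j u z hjz hj1
        rw [hiter]
        by_cases hu' : u ∈ ZF.iter valid T k
        · exact Or.inl hu'
        · refine Or.inr ⟨z, ?_⟩
          have hzwhite : z ∉ ZF.expand B F (j - 1) := hv.2.2.2.1
          -- z performs no force at time-steps ≤ K - k, hence z ∈ iter T k
          have hzT : z ∈ ZF.iter valid T k := by
            apply ih
            intro j' hj' y hjy
            have hj'1 : 1 ≤ j' := by
              rcases Nat.eq_zero_or_pos j' with h | h
              · rw [h, hF.init] at hjy; exact absurd hjy (Set.notMem_empty _)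
              · exact h
            have := (hforce j' z y hjy hj'1).2.2.1
            exact hzwhite (hmono (j' - 1) (j - 1) (by omega) this)
          refine ⟨Set.mem_univ z, Set.mem_univ u, hzT, hu', hv.2.2.2.2.1.symm, ?_⟩
          intro w _ hadj hw
          -- w is adjacent to z and not in iter T k, so w performs a force at step ≤ K - k
          have hwP : ∃ j' ≤ K - k, ∃ y, (w, y) ∈ F j' := by
            by_contra h
            push_neg at h
            exact hw (ih w fun j' hj' y hjy => h j' hj' y hjy)
          obtain ⟨j', hj', y, hwy⟩ := hwP
          have hj'1 : 1 ≤ j' := by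
            rcases Nat.eq_zero_or_pos j' with h | h
            · rw [h, hF.init] at hwy; exact absurd hwy (Set.notMem_empty _)
            · exact h
          have hv' := hforce j' w y hwy hj'1
          -- z is white at time j' - 1, so by uniqueness of white neighbor, y = z
          have hzw' : z ∉ ZF.expand B F (j' - 1) := fun h =>
            hzwhite (hmono (j' - 1) (j - 1) (by omega) h)
          have hyz : z = y := hv'.2.2.2.2.2 z (Set.mem_univ z) hadj.symm hzw'
          subst hyz
          -- z can only be forced once, so j' = j and w = u
          have hj'j : j' = j := by
            by_contra h
            have hj'lt : j' < j := by omega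
            have : z ∈ ZF.expand B F (j - 1) :=
              hmono j' (j - 1) (by omega) (htarget j' w z hwy hj'1)
            exact hzwhite this
          subst hj'j
          exact hF.uniqueForcer j' w u z hwy hjz
  refine ⟨fun v hv => Set.mem_univ v, K, fun v _ => ?_⟩
  apply key K v
  intro j hj z hjz
  have : j = 0 := by omega
  rw [this, hF.init] at hjz
  exact hjz
end

section
/- Let F be a relaxed chronology of standard zero forces for a zero forcing set B of a graph G. Then the reversal rev(F), obtained by reversing each force and reversing the order of time-steps, is a relaxed chronology of forces for the terminus term(F). -/
section RevAux

variable {V : Type*} [Fintype V] [DecidableEq V]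
variable {G : SimpleGraph V} {B : Set V} {K : ℕ} {F : ℕ → Set (V × V)}

lemma expand_mono' (B : Set V) (F : ℕ → Set (V × V)) {a b : ℕ} (h : a ≤ b) :
    ZF.expand B F a ⊆ ZF.expand B F b := by
  induction h with
  | refl => exact subset_rfl
  | step _ ih => exact ih.trans Set.subset_union_left

lemma valid_of_mem (hF : ZF.RelaxedChron (ZF.ZFValid G Set.univ) Set.univ B K F)
    {t : ℕ} {u v : V} (h1 : 1 ≤ t) (h2 : t ≤ K) (huv : (u, v) ∈ F t) :
    ZF.ZFValid G Set.univ (ZF.expand B F (t - 1)) u v := by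
  obtain ⟨s, rfl⟩ : ∃ s, t = s + 1 := ⟨t - 1, by omega⟩
  simpa using hF.forcesValid s (by omega) u v huv

lemma forced_mem {t : ℕ} {u v : V} (huv : (u, v) ∈ F t) (h1 : 1 ≤ t) :
    v ∈ ZF.expand B F t := by
  obtain ⟨s, rfl⟩ : ∃ s, t = s + 1 := ⟨t - 1, by omega⟩
  exact Or.inr ⟨u, huv⟩

lemma time_bounds (hF : ZF.RelaxedChron (ZF.ZFValid G Set.univ) Set.univ B K F)
    {t : ℕ} {u v : V} (h : (u, v) ∈ F t) : 1 ≤ t ∧ t ≤ K := by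
  constructor
  · rcases Nat.eq_zero_or_pos t with rfl | ht
    · rw [hF.init] at h; exact absurd h (Set.notMem_empty _)
    · exact ht
  · by_contra hc
    rw [hF.bound t (by omega)] at h
    exact absurd h (Set.notMem_empty _)

/-- If `v` is forced at time `j`, any force performed by `v` is strictly later. -/
lemma force_time_lt (hF : ZF.RelaxedChron (ZF.ZFValid G Set.univ) Set.univ B K F)
    {j t : ℕ} {u v w : V} (huv : (u, v) ∈ F j) (hvw : (v, w) ∈ F t) : j < t := by
  obtain ⟨hj1, hjK⟩ := time_bounds hF huv
  obtain ⟨ht1, htK⟩ := time_bounds hF hvw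
  by_contra hc
  have h1 := (valid_of_mem hF hj1 hjK huv).2.2.2.1
  have h2 := (valid_of_mem hF ht1 htK hvw).2.2.1
  exact h1 (expand_mono' B F (by omega : t - 1 ≤ j - 1) h2)

/-- A vertex performs forces at only one time-step. -/
lemma no_double_force (hF : ZF.RelaxedChron (ZF.ZFValid G Set.univ) Set.univ B K F)
    {j t : ℕ} {u v w : V} (huv : (u, v) ∈ F j) (huw : (u, w) ∈ F t) (hjt : j < t) :
    False := by
  obtain ⟨hj1, hjK⟩ := time_bounds hF huv
  obtain ⟨ht1, htK⟩ := time_bounds hF huw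
  obtain ⟨-, -, -, hvnB, hadj, huniq⟩ := valid_of_mem hF hj1 hjK huv
  obtain ⟨-, -, -, hwnB, hadjw, -⟩ := valid_of_mem hF ht1 htK huw
  have hwv : w = v := huniq w trivial hadjw
    (fun h => hwnB (expand_mono' B F (by omega : j - 1 ≤ t - 1) h))
  subst hwv
  exact hwnB (expand_mono' B F (by omega : j ≤ t - 1) (forced_mem huv hj1))

lemma expand_rev (hF : ZF.RelaxedChron (ZF.ZFValid G Set.univ) Set.univ B K F)
    {k : ℕ} (hk : k ≤ K) :
    ZF.expand (ZF.terminus Set.univ F K) (ZF.revChron F K) k =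
      ZF.terminus Set.univ F K ∪
        {x | ∃ y t, K - k + 1 ≤ t ∧ t ≤ K ∧ (x, y) ∈ F t} := by
  induction k with
  | zero =>
    have h0 : {x : V | ∃ y t, K - 0 + 1 ≤ t ∧ t ≤ K ∧ (x, y) ∈ F t} = ∅ := by
      ext x
      simp only [Set.mem_setOf_eq, Set.mem_empty_iff_false, iff_false, not_exists]
      intro y t h
      omega
    rw [h0, Set.union_empty]
    rfl
  | succ k ih =>
    have hk' : k ≤ K := by omega
    have hstep : ZF.expand (ZF.terminus Set.univ F K) (ZF.revChron F K) (k + 1) =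
        ZF.expand (ZF.terminus Set.univ F K) (ZF.revChron F K) k ∪
          {v | ∃ u, (u, v) ∈ ZF.revChron F K (k + 1)} := rfl
    rw [hstep, ih hk']
    have hrev : {v : V | ∃ u, (u, v) ∈ ZF.revChron F K (k + 1)} =
        {x | ∃ y, (x, y) ∈ F (K - k)} := by
      unfold ZF.revChron
      rw [if_pos ⟨by omega, by omega⟩]
      have hh : K - (k + 1) + 1 = K - k := by omega
      rw [hh]
      ext x
      simp only [Set.mem_setOf_eq]
    rw [hrev]
    ext x
    simp only [Set.mem_union, Set.mem_setOf_eq]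
    constructor
    · rintro ((h | ⟨y, t, h1, h2, h3⟩) | ⟨y, h⟩)
      · left; exact h
      · right; exact ⟨y, t, by omega, h2, h3⟩
      · right; exact ⟨y, K - k, by omega, by omega, h⟩
    · rintro (h | ⟨y, t, h1, h2, h3⟩)
      · left; left; exact h
      · by_cases ht : t = K - k
        · subst ht; right; exact ⟨y, h3⟩
        · left; right; exact ⟨y, t, by omega, h2, h3⟩

end RevAux

/-- The reversal of a relaxed chronology of standard forces for a zero forcing set `B` of `G`
is a relaxed chronology of forces for the terminus. -/
theorem reversal_isRelaxedChron {V : Type*} [Fintype V] [DecidableEq V]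
    (G : SimpleGraph V) (B : Set V) (K : ℕ) (F : ℕ → Set (V × V))
    (hB : ZF.IsForcingSet (ZF.ZFValid G Set.univ) Set.univ B)
    (hF : ZF.RelaxedChron (ZF.ZFValid G Set.univ) Set.univ B K F) :
    ZF.RelaxedChron (ZF.ZFValid G Set.univ) Set.univ (ZF.terminus Set.univ F K) K
      (ZF.revChron F K) := by
  classical
  refine ⟨fun v hv => trivial, ?_, ?_, ?_, ?_, ?_⟩
  · simp [ZF.revChron]
  · intro k hk
    unfold ZF.revChron
    rw [if_neg (by omega)]
  · -- forcesValid
    intro k hk v u hvu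
    unfold ZF.revChron at hvu
    rw [if_pos ⟨by omega, by omega⟩] at hvu
    simp only [Set.mem_setOf_eq] at hvu
    -- hvu : (u, v) ∈ F (K - (k+1) + 1)
    set j := K - (k + 1) + 1 with hj
    have hj1 : 1 ≤ j := by omega
    have hjK : j ≤ K := by omega
    obtain ⟨-, -, huB, hvnB, hadj, huniq⟩ := valid_of_mem hF hj1 hjK hvu
    have hRk := expand_rev hF (show k ≤ K by omega)
    have hjk : K - k + 1 = j + 1 := by omega
    rw [hjk] at hRk
    rw [hRk]
    refine ⟨trivial, trivial, ?_, ?_, hadj.symm, ?_⟩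
    · -- v is blue in the reversal before step k+1
      by_cases hvT : ∀ w, (v, w) ∉ ZF.forcesOf F K
      · exact Or.inl ⟨trivial, hvT⟩
      · push_neg at hvT
        obtain ⟨w, hw⟩ := hvT
        obtain ⟨t, ht1, htK, hw⟩ := hw
        have hlt : j < t := force_time_lt hF hvu hw
        exact Or.inr ⟨w, t, by omega, htK, hw⟩
    · -- u is not yet blue in the reversal
      rintro (⟨-, hnof⟩ | ⟨y, t, ht1, htK, hy⟩)
      · exact hnof v ⟨j, hj1, hjK, hvu⟩
      · exact no_double_force hF hvu hy (by omega)
    · -- uniqueness of the white neighbor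
      intro w _ hwv hwR
      have hwnT : w ∉ ZF.terminus Set.univ F K := fun h => hwR (Or.inl h)
      have hforce : ∃ y t, 1 ≤ t ∧ t ≤ K ∧ (w, y) ∈ F t := by
        by_contra hc
        push_neg at hc
        refine hwnT ⟨trivial, fun y hy => ?_⟩
        obtain ⟨t, ht1, htK, hmem⟩ := hy
        exact hc y t ht1 htK hmem
      obtain ⟨y, t, ht1, htK, hwy⟩ := hforce
      have htj : t ≤ j := by
        by_contra hc
        exact hwR (Or.inr ⟨y, t, by omega, htK, hwy⟩)
      obtain ⟨-, -, hwBt, hynB, hadjwy, huniqt⟩ := valid_of_mem hF ht1 htK hwy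
      have hvnEt : v ∉ ZF.expand B F (t - 1) :=
        fun h => hvnB (expand_mono' B F (by omega : t - 1 ≤ j - 1) h)
      have hyv : v = y := huniqt v trivial hwv.symm hvnEt
      subst hyv
      have htj' : t = j := by
        by_contra hc
        exact hvnB (expand_mono' B F (by omega : t ≤ j - 1) (forced_mem hwy ht1))
      subst htj'
      exact hF.uniqueForcer j w u v hwy hvu
  · -- uniqueForcer
    intro k u₁ u₂ v h1 h2
    by_cases hk : 1 ≤ k ∧ k ≤ K
    · unfold ZF.revChron at h1 h2
      rw [if_pos hk] at h1 h2
      simp only [Set.mem_setOf_eq] at h1 h2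
      have hb1 : 1 ≤ K - k + 1 := by omega
      have hb2 : K - k + 1 ≤ K := by omega
      have hv1 := valid_of_mem hF hb1 hb2 h1
      have hv2 := valid_of_mem hF hb1 hb2 h2
      exact (hv1.2.2.2.2.2 u₂ trivial hv2.2.2.2.2.1 hv2.2.2.2.1).symm
    · unfold ZF.revChron at h1
      rw [if_neg hk] at h1
      exact absurd h1 (Set.notMem_empty _)
  · -- complete
    intro x _
    rw [expand_rev hF le_rfl]
    by_cases hx : ∀ u, (x, u) ∉ ZF.forcesOf F K
    · exact Or.inl ⟨trivial, hx⟩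
    · push_neg at hx
      obtain ⟨u, hu⟩ := hx
      obtain ⟨t, ht1, htK, h⟩ := hu
      exact Or.inr ⟨u, t, by omega, htK, h⟩
end

section
/- Let F be a relaxed chronology of standard zero forces for a zero forcing set B of a graph G. Then the propagation time of the reversal rev(F) (for the terminus of F) equals the propagation time of F. -/
namespace ZFRev
open ZF

variable {V : Type*} [Fintype V] [DecidableEq V] {G : SimpleGraph V}
  {B : Set V} {K : ℕ} {F : ℕ → Set (V × V)}

lemma mem_forcesOf {p : V × V} :
    p ∈ forcesOf F K ↔ ∃ k < K, p ∈ F (k + 1) := by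
  constructor
  · rintro ⟨k, hk1, hkK, hp⟩
    refine ⟨k - 1, by omega, ?_⟩
    have h : k - 1 + 1 = k := by omega
    rw [h]; exact hp
  · rintro ⟨k, hk, hp⟩
    exact ⟨k + 1, by omega, by omega, hp⟩

lemma expand_mono {j k : ℕ} (h : j ≤ k) : expand B F j ⊆ expand B F k := by
  induction h with
  | refl => exact subset_rfl
  | step _ ih => exact ih.trans Set.subset_union_left

lemma mem_expand_cases {v : V} {k : ℕ} (hv : v ∈ expand B F k) :
    v ∈ B ∨ ∃ j < k, ∃ u, (u, v) ∈ F (j + 1) := by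
  induction k with
  | zero => exact Or.inl hv
  | succ k ih =>
    rcases hv with hv | ⟨u, hu⟩
    · rcases ih hv with h | ⟨j, hj, u, hu⟩
      · exact Or.inl h
      · exact Or.inr ⟨j, by omega, u, hu⟩
    · exact Or.inr ⟨k, by omega, u, hu⟩

section withChron

variable (hF : RelaxedChron (ZFValid G Set.univ) Set.univ B K F)
include hF

lemma force_valid {u v : V} {m : ℕ} (h : (u, v) ∈ F m) (h1 : 1 ≤ m) (hK : m ≤ K) :
    ZFValid G Set.univ (expand B F (m - 1)) u v := by
  obtain ⟨m', rfl⟩ : ∃ m', m = m' + 1 := ⟨m - 1, by omega⟩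
  simpa using hF.forcesValid m' (by omega) u v h

lemma not_expand_of_force {u v : V} {m j : ℕ} (h : (u, v) ∈ F m) (h1 : 1 ≤ m)
    (hK : m ≤ K) (hj : j < m) : v ∉ expand B F j :=
  fun hv => (force_valid hF h h1 hK).2.2.2.1 (expand_mono (by omega) hv)

omit hF in
lemma mem_expand_of_force {u v : V} {m : ℕ} (h : (u, v) ∈ F m) (h1 : 1 ≤ m) :
    v ∈ expand B F m := by
  obtain ⟨m', rfl⟩ : ∃ m', m = m' + 1 := ⟨m - 1, by omega⟩
  exact Or.inr ⟨u, h⟩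

lemma force_unique {u₁ u₂ v : V} {m₁ m₂ : ℕ} (h₁ : (u₁, v) ∈ F m₁) (h₂ : (u₂, v) ∈ F m₂)
    (h11 : 1 ≤ m₁) (h1K : m₁ ≤ K) (h21 : 1 ≤ m₂) (h2K : m₂ ≤ K) :
    m₁ = m₂ ∧ u₁ = u₂ := by
  rcases lt_trichotomy m₁ m₂ with h | rfl | h
  · exact absurd (expand_mono (by omega : m₁ ≤ m₂ - 1) (mem_expand_of_force h₁ h11))
      (not_expand_of_force hF h₂ h21 h2K (by omega))
  · obtain ⟨m', rfl⟩ : ∃ m', m₁ = m' + 1 := ⟨m₁ - 1, by omega⟩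
    exact ⟨rfl, hF.uniqueForcer (m' + 1) u₁ u₂ v h₁ h₂⟩
  · exact absurd (expand_mono (by omega : m₂ ≤ m₁ - 1) (mem_expand_of_force h₂ h21))
      (not_expand_of_force hF h₁ h11 h1K (by omega))

lemma force_out_unique {u v₁ v₂ : V} {m₁ m₂ : ℕ} (h₁ : (u, v₁) ∈ F m₁) (h₂ : (u, v₂) ∈ F m₂)
    (h11 : 1 ≤ m₁) (h1K : m₁ ≤ K) (h21 : 1 ≤ m₂) (h2K : m₂ ≤ K) :
    v₁ = v₂ := by
  have key : ∀ {a b : V} {ma mb : ℕ}, (u, a) ∈ F ma → (u, b) ∈ F mb → 1 ≤ ma → ma ≤ K →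
      1 ≤ mb → mb ≤ K → ma ≤ mb → b = a := by
    intro a b ma mb ha hb ha1 haK hb1 hbK hab
    have hva := force_valid hF ha ha1 haK
    have hvb := force_valid hF hb hb1 hbK
    exact hva.2.2.2.2.2 b trivial hvb.2.2.2.2.1
      (fun hmem => hvb.2.2.2.1 (expand_mono (by omega) hmem))
  rcases le_total m₁ m₂ with h | h
  · exact (key h₁ h₂ h11 h1K h21 h2K h).symm
  · exact key h₂ h₁ h21 h2K h11 h1K h

lemma S_forcer_unique {u₁ u₂ v : V} (h₁ : (u₁, v) ∈ forcesOf F K)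
    (h₂ : (u₂, v) ∈ forcesOf F K) : u₁ = u₂ := by
  obtain ⟨k₁, hk11, hk1K, hm1⟩ := h₁
  obtain ⟨k₂, hk21, hk2K, hm2⟩ := h₂
  exact (force_unique hF hm1 hm2 hk11 hk1K hk21 hk2K).2

lemma S_out_unique {u v₁ v₂ : V} (h₁ : (u, v₁) ∈ forcesOf F K)
    (h₂ : (u, v₂) ∈ forcesOf F K) : v₁ = v₂ := by
  obtain ⟨k₁, hk11, hk1K, hm1⟩ := h₁
  obtain ⟨k₂, hk21, hk2K, hm2⟩ := h₂
  exact force_out_unique hF hm1 hm2 hk11 hk1K hk21 hk2K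

lemma S_adj {u v : V} (h : (u, v) ∈ forcesOf F K) : G.Adj u v := by
  obtain ⟨k, hk1, hkK, hm⟩ := h
  exact (force_valid hF hm hk1 hkK).2.2.2.2.1

lemma S_not_B {u v : V} (h : (u, v) ∈ forcesOf F K) : v ∉ B := by
  obtain ⟨k, hk1, hkK, hm⟩ := h
  exact fun hv => not_expand_of_force hF hm hk1 hkK (by omega : (0:ℕ) < k) hv

lemma S_exists {v : V} (hv : v ∉ B) : ∃ u, (u, v) ∈ forcesOf F K := by
  have hvK : v ∈ expand B F K := hF.complete trivial
  rcases mem_expand_cases hvK with h | ⟨j, hj, u, hu⟩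
  · exact absurd h hv
  · exact ⟨u, j + 1, by omega, by omega, hu⟩

end withChron

lemma forceIter_succ (valid : Set V → V → V → Prop) (S : Set (V × V)) (B : Set V) (t : ℕ) :
    forceIter valid S B (t + 1) = forceStep valid S (forceIter valid S B t) :=
  Function.iterate_succ_apply' _ _ _

lemma subset_forceStep (valid : Set V → V → V → Prop) (S : Set (V × V)) (D : Set V) :
    D ⊆ forceStep valid S D := Set.subset_union_left

lemma forceStep_mono {S : Set (V × V)} {D D' : Set V} (h : D ⊆ D') :
    forceStep (ZFValid G Set.univ) S D ⊆ forceStep (ZFValid G Set.univ) S D' := by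
  rintro x (hx | ⟨u, huS, hval⟩)
  · exact Or.inl (h hx)
  · by_cases hxD' : x ∈ D'
    · exact Or.inl hxD'
    · exact Or.inr ⟨u, huS, trivial, trivial, h hval.2.2.1, hxD', hval.2.2.2.2.1,
        fun w hw hadj hwD => hval.2.2.2.2.2 w hw hadj (fun hmem => hwD (h hmem))⟩

lemma forceIter_mono {S : Set (V × V)} {B : Set V} {t t' : ℕ} (h : t ≤ t') :
    forceIter (ZFValid G Set.univ) S B t ⊆ forceIter (ZFValid G Set.univ) S B t' := by
  induction h with
  | refl => exact subset_rfl
  | step _ ih =>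
    refine ih.trans ?_
    rw [forceIter_succ]
    exact subset_forceStep _ _ _

section withChron2

variable (hF : RelaxedChron (ZFValid G Set.univ) Set.univ B K F)
include hF

lemma expand_subset_iter :
    ∀ k, expand B F k ⊆ forceIter (ZFValid G Set.univ) (forcesOf F K) B k := by
  intro k
  induction k with
  | zero => exact subset_rfl
  | succ k ih =>
    rintro v (hv | ⟨u, hu⟩)
    · exact forceIter_mono (by omega) (ih hv)
    · by_cases hk : k < K
      · have hval := hF.forcesValid k hk u v hu
        rw [forceIter_succ]
        by_cases hvE : v ∈ forceIter (ZFValid G Set.univ) (forcesOf F K) B k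
        · exact Or.inl hvE
        · exact Or.inr ⟨u, mem_forcesOf.2 ⟨k, hk, hu⟩, trivial, trivial, ih hval.2.2.1, hvE,
            hval.2.2.2.2.1, fun w hw hadj hwE => hval.2.2.2.2.2 w hw hadj
              (fun hmem => hwE (ih hmem))⟩
      · rw [hF.bound (k + 1) (by omega)] at hu
        exact absurd hu (Set.notMem_empty _)

omit hF in
lemma iter_forcer {S : Set (V × V)} {v : V} {k : ℕ}
    (hv : v ∈ forceIter (ZFValid G Set.univ) S B k) (hvB : v ∉ B) :
    ∃ i < k, ∃ u, (u, v) ∈ S ∧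
      ZFValid G Set.univ (forceIter (ZFValid G Set.univ) S B i) u v := by
  induction k with
  | zero => exact absurd hv hvB
  | succ k ih =>
    rw [forceIter_succ] at hv
    rcases hv with hv | ⟨u, huS, hval⟩
    · obtain ⟨i, hi, u, h⟩ := ih hv
      exact ⟨i, by omega, u, h⟩
    · exact ⟨k, by omega, u, huS, hval⟩

end withChron2

/-- Blue set of the reversal run at reversal-time `p - k`, described in terms of the
forward greedy run at time `k`: white vertices together with "active" blue vertices. -/
def Dset (G : SimpleGraph V) (B : Set V) (K : ℕ) (F : ℕ → Set (V × V)) (k : ℕ) : Set V :=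
  (Set.univ \ forceIter (ZFValid G Set.univ) (forcesOf F K) B k) ∪
  {u ∈ forceIter (ZFValid G Set.univ) (forcesOf F K) B k |
    ∀ v, (u, v) ∈ forcesOf F K → v ∉ forceIter (ZFValid G Set.univ) (forcesOf F K) B k}

section keystep

variable (hF : RelaxedChron (ZFValid G Set.univ) Set.univ B K F)
include hF

lemma key_step (k : ℕ) :
    Dset G B K F k ⊆
      forceStep (ZFValid G Set.univ) (Prod.swap ⁻¹' forcesOf F K) (Dset G B K F (k + 1)) := by
  classical
  set S := forcesOf F K with hS
  set E : ℕ → Set V := forceIter (ZFValid G Set.univ) S B with hE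
  have hactive : ∀ {x : V}, x ∉ E k → ∀ v, (x, v) ∈ S → v ∉ E (k + 1) := by
    intro x hx v hxv hvE
    have hvB : v ∉ B := S_not_B hF hxv
    obtain ⟨i, hi, u, huS, hval⟩ := iter_forcer (B := B) hvE hvB
    have hux : u = x := S_forcer_unique hF huS hxv
    exact hx (forceIter_mono (by omega) (hux ▸ hval.2.2.1))
  rintro x (⟨-, hx⟩ | ⟨hxE, hA⟩)
  · by_cases hxE1 : x ∈ E (k + 1)
    · exact Or.inl (Or.inr ⟨hxE1, fun v hv => hactive hx v hv⟩)
    · exact Or.inl (Or.inl ⟨trivial, hxE1⟩)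
  · by_cases hA1 : ∀ v, (x, v) ∈ S → v ∉ E (k + 1)
    · exact Or.inl (Or.inr ⟨forceIter_mono (by omega) hxE, hA1⟩)
    · push_neg at hA1
      obtain ⟨v, hxv, hvE1⟩ := hA1
      have hvE : v ∉ E k := hA v hxv
      refine Or.inr ⟨v, hxv, trivial, trivial, ?_, ?_, (S_adj hF hxv).symm, ?_⟩
      · exact Or.inr ⟨hvE1, fun y hvy => hactive hvE y hvy⟩
      · rintro (⟨-, hc⟩ | ⟨-, hc⟩)
        · exact hc (forceIter_mono (by omega) hxE)
        · exact hc v hxv hvE1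
      · intro w hw hadj hwD
        have hwE1 : w ∈ E (k + 1) := by
          by_contra h
          exact hwD (Or.inl ⟨trivial, h⟩)
        have hwy : ∃ y, (w, y) ∈ S ∧ y ∈ E (k + 1) := by
          by_contra h
          push_neg at h
          exact hwD (Or.inr ⟨hwE1, h⟩)
        obtain ⟨y, hwy, hyE1⟩ := hwy
        have hyB : y ∉ B := S_not_B hF hwy
        obtain ⟨i, hi, u', hu'S, hval⟩ := iter_forcer (B := B) hyE1 hyB
        have hu'w : u' = w := S_forcer_unique hF hu'S hwy
        subst hu'w
        have hvy : v = y := hval.2.2.2.2.2 v trivial hadj.symm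
          (fun hmem => hvE (forceIter_mono (by omega) hmem))
        exact S_forcer_unique hF (hvy ▸ hwy) hxv

lemma D_zero : Dset G B K F 0 = Set.univ := by
  apply Set.eq_univ_of_forall
  intro x
  by_cases hx : x ∈ B
  · exact Or.inr ⟨hx, fun v hv hvB => S_not_B hF hv hvB⟩
  · exact Or.inl ⟨trivial, hx⟩

lemma D_top {p : ℕ} (hp : Set.univ ⊆ forceIter (ZFValid G Set.univ) (forcesOf F K) B p) :
    Dset G B K F p = terminus Set.univ F K := by
  ext x
  constructor
  · rintro (⟨-, hc⟩ | ⟨-, hA⟩)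
    · exact absurd (hp trivial) hc
    · exact ⟨trivial, fun u hu => hA u hu (hp trivial)⟩
  · rintro ⟨-, ht⟩
    exact Or.inr ⟨hp trivial, fun v hv => absurd hv (ht v)⟩

lemma pt_rev_le :
    ptForces (ZFValid G Set.univ) Set.univ (Prod.swap ⁻¹' forcesOf F K)
        (terminus Set.univ F K)
      ≤ ptForces (ZFValid G Set.univ) Set.univ (forcesOf F K) B := by
  classical
  set S := forcesOf F K with hS
  set p := ptForces (ZFValid G Set.univ) Set.univ S B with hp
  have hne : p ∈ {t | Set.univ ⊆ forceIter (ZFValid G Set.univ) S B t} :=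
    Nat.sInf_mem ⟨K, hF.complete.trans (expand_subset_iter hF K)⟩
  have main : ∀ t, t ≤ p → Dset G B K F (p - t) ⊆
      forceIter (ZFValid G Set.univ) (Prod.swap ⁻¹' S) (terminus Set.univ F K) t := by
    intro t
    induction t with
    | zero =>
      intro _
      rw [Nat.sub_zero, D_top hF hne]
      exact fun x hx => hx
    | succ t ih =>
      intro ht
      have h1 : p - t = (p - (t + 1)) + 1 := by omega
      calc Dset G B K F (p - (t + 1))
          ⊆ forceStep (ZFValid G Set.univ) (Prod.swap ⁻¹' S)
              (Dset G B K F (p - (t + 1) + 1)) := key_step hF _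
        _ = forceStep (ZFValid G Set.univ) (Prod.swap ⁻¹' S) (Dset G B K F (p - t)) := by
              rw [← h1]
        _ ⊆ forceStep (ZFValid G Set.univ) (Prod.swap ⁻¹' S)
              (forceIter (ZFValid G Set.univ) (Prod.swap ⁻¹' S) (terminus Set.univ F K) t) :=
              forceStep_mono (ih (by omega))
        _ = forceIter (ZFValid G Set.univ) (Prod.swap ⁻¹' S) (terminus Set.univ F K) (t + 1) :=
              (forceIter_succ _ _ _ _).symm
  have hfin : Set.univ ⊆
      forceIter (ZFValid G Set.univ) (Prod.swap ⁻¹' S) (terminus Set.univ F K) p := by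
    have hm := main p le_rfl
    rw [Nat.sub_self, D_zero hF] at hm
    exact hm
  exact Nat.sInf_le hfin

end keystep

/-- Vertices performing a force strictly after time `m`. -/
def PerfAfter (F : ℕ → Set (V × V)) (K m : ℕ) : Set V :=
  {u | ∃ v j, m < j ∧ j ≤ K ∧ (u, v) ∈ F j}

section revchron

variable (hF : RelaxedChron (ZFValid G Set.univ) Set.univ B K F)

lemma expand_rev : ∀ {k : ℕ}, k ≤ K →
    expand (terminus Set.univ F K) (revChron F K) k =
      terminus Set.univ F K ∪ PerfAfter F K (K - k) := by
  intro k
  induction k with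
  | zero =>
    intro _
    have : PerfAfter F K (K - 0) = ∅ := by
      ext u; simp only [PerfAfter, Set.mem_setOf_eq, Set.mem_empty_iff_false, iff_false]
      rintro ⟨v, j, h1, h2, -⟩; omega
    rw [this]
    simp [expand]
  | succ k ih =>
    intro hk
    have hkK : k ≤ K := by omega
    have harg : K - (k + 1) + 1 = K - k := by omega
    have hrev : revChron F K (k + 1) = {p : V × V | (p.2, p.1) ∈ F (K - k)} := by
      rw [revChron, if_pos ⟨by omega, by omega⟩, harg]
    show expand (terminus Set.univ F K) (revChron F K) k ∪ _ = _
    rw [ih hkK, hrev]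
    ext x
    simp only [Set.mem_union, Set.mem_setOf_eq, PerfAfter]
    constructor
    · rintro ((ht | ⟨v, j, h1, h2, hm⟩) | ⟨u, hu⟩)
      · exact Or.inl ht
      · exact Or.inr ⟨v, j, by omega, h2, hm⟩
      · exact Or.inr ⟨u, K - k, by omega, by omega, hu⟩
    · rintro (ht | ⟨v, j, h1, h2, hm⟩)
      · exact Or.inl (Or.inl ht)
      · by_cases hj : j = K - k
        · exact Or.inr ⟨v, hj ▸ hm⟩
        · exact Or.inl (Or.inr ⟨v, j, by omega, h2, hm⟩)

include hF

omit hF in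
lemma not_terminus_iff {v : V} :
    v ∉ terminus Set.univ F K ↔ ∃ u m, 1 ≤ m ∧ m ≤ K ∧ (v, u) ∈ F m := by
  constructor
  · intro h
    by_contra hc
    push_neg at hc
    refine h ⟨trivial, fun u hu => ?_⟩
    obtain ⟨m, h1, h2, hm⟩ := hu
    exact hc u m h1 h2 hm
  · rintro ⟨u, m, h1, h2, hm⟩ ⟨-, ht⟩
    exact ht u ⟨m, h1, h2, hm⟩

lemma rev_chron :
    RelaxedChron (ZFValid G Set.univ) Set.univ (terminus Set.univ F K) K (revChron F K) := by
  constructor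
  · exact fun _ _ => trivial
  · rw [revChron, if_neg (by omega)]
  · intro k hk
    rw [revChron, if_neg (by omega)]
  · -- forcesValid
    intro k hk a b hab
    rw [revChron, if_pos ⟨by omega, by omega⟩] at hab
    set m := K - (k + 1) + 1 with hm
    have hm1 : 1 ≤ m := by omega
    have hmK : m ≤ K := by omega
    have hba : (b, a) ∈ F m := hab
    have hKk : K - k = m := by omega
    rw [expand_rev (show k ≤ K by omega), hKk]
    have haB : a ∉ expand B F (m - 1) := (force_valid hF hba hm1 hmK).2.2.2.1
    refine ⟨trivial, trivial, ?_, ?_, ?_, ?_⟩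
    · -- a is blue: terminus or performs a force after m
      by_cases ht : a ∈ terminus Set.univ F K
      · exact Or.inl ht
      · obtain ⟨y, m', h1', h2', hay⟩ := not_terminus_iff.1 ht
        refine Or.inr ⟨y, m', ?_, h2', hay⟩
        -- m < m' since a is blue only from time m
        have haE : a ∈ expand B F (m' - 1) := (force_valid hF hay h1' h2').2.2.1
        by_contra hc
        exact haB (expand_mono (by omega) haE)
    · -- b is white: not terminus, no force after m
      rintro (ht | ⟨y, j, hj1, hjK, hby⟩)
      · exact ht.2 a ⟨m, hm1, hmK, hba⟩
      · have : a = y := S_out_unique hF ⟨m, hm1, hmK, hba⟩ ⟨j, by omega, hjK, hby⟩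
        subst this
        have := (force_unique hF hba hby hm1 hmK (by omega) hjK).1
        omega
    · exact (S_adj hF ⟨m, hm1, hmK, hba⟩).symm
    · intro w hw hadj hwD
      rw [Set.mem_union] at hwD
      push_neg at hwD
      obtain ⟨hwt, hwP⟩ := hwD
      obtain ⟨y, m', h1', h2', hwy⟩ := not_terminus_iff.1 hwt
      have hm'm : m' ≤ m := by
        by_contra hc
        exact hwP ⟨y, m', by omega, h2', hwy⟩
      have hval := force_valid hF hwy h1' h2'
      have hay : a = y := hval.2.2.2.2.2 a trivial hadj.symm
        (fun hmem => haB (expand_mono (by omega) hmem))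
      subst hay
      exact S_forcer_unique hF ⟨m', h1', h2', hwy⟩ ⟨m, hm1, hmK, hba⟩
  · -- uniqueForcer
    intro k u₁ u₂ v h₁ h₂
    rw [revChron] at h₁ h₂
    by_cases hc : 1 ≤ k ∧ k ≤ K
    · rw [if_pos hc] at h₁ h₂
      exact S_out_unique hF ⟨K - k + 1, by omega, by omega, h₁⟩
        ⟨K - k + 1, by omega, by omega, h₂⟩
    · rw [if_neg hc] at h₁
      exact absurd h₁ (Set.notMem_empty _)
  · -- complete
    intro v _
    rw [expand_rev le_rfl]
    by_cases ht : v ∈ terminus Set.univ F K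
    · exact Or.inl ht
    · obtain ⟨u, m, h1, h2, hm⟩ := not_terminus_iff.1 ht
      exact Or.inr ⟨u, m, by omega, h2, hm⟩

lemma forcesOf_rev :
    forcesOf (revChron F K) K = Prod.swap ⁻¹' forcesOf F K := by
  ext ⟨a, b⟩
  constructor
  · rintro ⟨k, hk1, hkK, hp⟩
    rw [revChron, if_pos ⟨hk1, hkK⟩] at hp
    exact ⟨K - k + 1, by omega, by omega, hp⟩
  · rintro ⟨m, hm1, hmK, hp⟩
    refine ⟨K - m + 1, by omega, by omega, ?_⟩
    rw [revChron, if_pos ⟨by omega, by omega⟩]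
    have h : K - (K - m + 1) + 1 = m := by omega
    rw [h]
    exact hp

lemma terminus_rev :
    terminus Set.univ (revChron F K) K = B := by
  rw [terminus, forcesOf_rev hF]
  ext v
  simp only [Set.mem_sep_iff, Set.mem_univ, true_and, Set.mem_preimage, Set.mem_setOf_eq]
  constructor
  · intro h
    by_contra hv
    obtain ⟨u, hu⟩ := S_exists hF hv
    exact h u hu
  · intro hv u hu
    exact S_not_B hF hu hv

end revchron
end ZFRev

/-- The propagation time of the reversal of a relaxed chronology of standard forces
(for the terminus) equals the propagation time of the original chronology. -/
theorem pt_reversal_eq {V : Type*} [Fintype V] [DecidableEq V]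
    (G : SimpleGraph V) (B : Set V) (K : ℕ) (F : ℕ → Set (V × V))
    (hB : ZF.IsForcingSet (ZF.ZFValid G Set.univ) Set.univ B)
    (hF : ZF.RelaxedChron (ZF.ZFValid G Set.univ) Set.univ B K F) :
    ZF.ptForces (ZF.ZFValid G Set.univ) Set.univ (Prod.swap ⁻¹' (ZF.forcesOf F K))
        (ZF.terminus Set.univ F K)
      = ZF.ptForces (ZF.ZFValid G Set.univ) Set.univ (ZF.forcesOf F K) B := by
  have h1 := ZFRev.pt_rev_le hF
  have hrev := ZFRev.rev_chron hF
  have h2 := ZFRev.pt_rev_le hrev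
  rw [ZFRev.forcesOf_rev hF, ZFRev.terminus_rev hF] at h2
  have hswap : Prod.swap ⁻¹' (Prod.swap ⁻¹' (ZF.forcesOf F K)) = ZF.forcesOf F K := by
    ext p; simp
  rw [hswap] at h2
  exact le_antisymm h1 h2
end

section
/- For every finite simple graph G, the minimum cardinality of a parallel increasing path cover of G equals the zero forcing number Z(G). -/
namespace ZFP
open ZF
set_option linter.unusedSectionVars false
set_option linter.unnecessarySimpa false

variable {V : Type*} [Fintype V] [DecidableEq V]

section iterlem
variable (valid : Set V → V → V → Prop) (B : Set V)

lemma iter_zero : iter valid B 0 = B := rfl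

lemma iter_succ (t : ℕ) : iter valid B (t + 1) = step valid (iter valid B t) :=
  Function.iterate_succ_apply' _ _ _

lemma iter_mono {s t : ℕ} (h : s ≤ t) : iter valid B s ⊆ iter valid B t := by
  induction t with
  | zero => simpa [Nat.le_zero.mp h] using subset_rfl
  | succ t ih =>
    rcases Nat.lt_or_ge s (t + 1) with h' | h'
    · exact (ih (Nat.lt_succ_iff.mp h')).trans (by rw [iter_succ]; exact Set.subset_union_left)
    · have : s = t + 1 := le_antisymm h h'
      subst this; exact subset_rfl

end iterlem

section main
variable (G : SimpleGraph V) (B : Set V)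

/-- first time a vertex becomes blue -/
noncomputable def tau (v : V) : ℕ := sInf {t | v ∈ iter (ZFValid G Set.univ) B t}

variable {K : ℕ}

lemma mem_iter_tau (hK : Set.univ ⊆ iter (ZFValid G Set.univ) B K) (v : V) :
    v ∈ iter (ZFValid G Set.univ) B (tau G B v) := by
  have h : {t | v ∈ iter (ZFValid G Set.univ) B t}.Nonempty := ⟨K, hK (Set.mem_univ v)⟩
  exact Nat.sInf_mem h

lemma tau_le {v : V} {t : ℕ} (h : v ∈ iter (ZFValid G Set.univ) B t) : tau G B v ≤ t :=
  Nat.sInf_le h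

lemma tau_le_K (hK : Set.univ ⊆ iter (ZFValid G Set.univ) B K) (v : V) : tau G B v ≤ K :=
  tau_le G B (hK (Set.mem_univ v))

lemma notMem_of_lt_tau {v : V} {t : ℕ} (h : t < tau G B v) :
    v ∉ iter (ZFValid G Set.univ) B t := fun hm => absurd (tau_le G B hm) (Nat.not_le.mpr h)

lemma tau_of_mem_B {v : V} (h : v ∈ B) : tau G B v = 0 :=
  Nat.le_zero.mp (tau_le G B (by rwa [iter_zero]))

lemma tau_pos (hK : Set.univ ⊆ iter (ZFValid G Set.univ) B K) {v : V} (hv : v ∉ B) :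
    0 < tau G B v := by
  rcases Nat.eq_zero_or_pos (tau G B v) with h | h
  swap
  · exact h
  · exact absurd (by have := mem_iter_tau G B hK v; rwa [h, iter_zero] at this) hv

open Classical in
/-- chosen forcer (parent) of a non-initial vertex -/
noncomputable def par (v : V) : V :=
  if h : ∃ u, ZFValid G Set.univ (iter (ZFValid G Set.univ) B (tau G B v - 1)) u v
  then h.choose else v

lemma par_spec (hK : Set.univ ⊆ iter (ZFValid G Set.univ) B K) {v : V} (hv : v ∉ B) :
    ZFValid G Set.univ (iter (ZFValid G Set.univ) B (tau G B v - 1)) (par G B v) v := by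
  have hpos := tau_pos G B hK hv
  have h1 : v ∈ iter (ZFValid G Set.univ) B (tau G B v - 1 + 1) := by
    rw [Nat.sub_add_cancel hpos]; exact mem_iter_tau G B hK v
  rw [iter_succ] at h1
  have h2 : v ∉ iter (ZFValid G Set.univ) B (tau G B v - 1) :=
    notMem_of_lt_tau G B (Nat.sub_lt hpos Nat.one_pos)
  have h3 : ∃ u, ZFValid G Set.univ (iter (ZFValid G Set.univ) B (tau G B v - 1)) u v := by
    rcases h1 with h1 | h1
    · exact absurd h1 h2
    · exact h1
  rw [par, dif_pos h3]
  exact h3.choose_spec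

lemma tau_par_lt (hK : Set.univ ⊆ iter (ZFValid G Set.univ) B K) {v : V} (hv : v ∉ B) :
    tau G B (par G B v) < tau G B v := by
  have h := (par_spec G B hK hv).2.2.1
  have h2 := tau_le G B h
  have h3 := tau_pos G B hK hv
  omega

lemma child_unique (hK : Set.univ ⊆ iter (ZFValid G Set.univ) B K) {u v w : V}
    (h1 : ZFValid G Set.univ (iter (ZFValid G Set.univ) B (tau G B v - 1)) u v)
    (h2 : ZFValid G Set.univ (iter (ZFValid G Set.univ) B (tau G B w - 1)) u w) :
    v = w := by
  have hvpos : 0 < tau G B v := by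
    by_contra h
    have h0 : tau G B v = 0 := by omega
    have := h1.2.2.2.1
    rw [h0] at this
    exact this (by have := mem_iter_tau G B hK v; rwa [h0] at this)
  have hwpos : 0 < tau G B w := by
    by_contra h
    have h0 : tau G B w = 0 := by omega
    have := h2.2.2.2.1
    rw [h0] at this
    exact this (by have := mem_iter_tau G B hK w; rwa [h0] at this)
  rcases le_total (tau G B v) (tau G B w) with hle | hle
  · exact (h1.2.2.2.2.2 w (Set.mem_univ w) h2.2.2.2.2.1
      (notMem_of_lt_tau G B (by omega))).symm
  · exact h2.2.2.2.2.2 v (Set.mem_univ v) h1.2.2.2.2.1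
      (notMem_of_lt_tau G B (by omega))

open Classical in
/-- the chosen child of a vertex, or itself if none -/
noncomputable def chd (u : V) : V :=
  if h : ∃ v, v ∉ B ∧ par G B v = u then h.choose else u

lemma chd_eq (hK : Set.univ ⊆ iter (ZFValid G Set.univ) B K) {v u : V}
    (hv : v ∉ B) (h : par G B v = u) : chd G B u = v := by
  have hex : ∃ v, v ∉ B ∧ par G B v = u := ⟨v, hv, h⟩
  rw [chd, dif_pos hex]
  obtain ⟨hw1, hw2⟩ := hex.choose_spec
  exact child_unique G B hK (hw2 ▸ par_spec G B hK hw1) (h ▸ par_spec G B hK hv)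

lemma chd_spec (hK : Set.univ ⊆ iter (ZFValid G Set.univ) B K) {u : V}
    (h : chd G B u ≠ u) :
    chd G B u ∉ B ∧ par G B (chd G B u) = u ∧ tau G B u < tau G B (chd G B u) ∧
      ZFValid G Set.univ (iter (ZFValid G Set.univ) B (tau G B (chd G B u) - 1)) u (chd G B u) := by
  by_cases hex : ∃ v, v ∉ B ∧ par G B v = u
  · have hc : chd G B u = hex.choose := by rw [chd, dif_pos hex]
    obtain ⟨hw1, hw2⟩ := hex.choose_spec
    rw [← hc] at hw1 hw2
    refine ⟨hw1, hw2, ?_, ?_⟩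
    · have := tau_par_lt G B hK hw1
      rwa [hw2] at this
    · have := par_spec G B hK hw1
      rwa [hw2] at this
  · exact absurd (by rw [chd, dif_neg hex]) h

lemma chd_B (hK : Set.univ ⊆ iter (ZFValid G Set.univ) B K) {u : V}
    (h : chd G B u ≠ u) : G.Adj u (chd G B u) :=
  (chd_spec G B hK h).2.2.2.2.2.2.2.1

/-- the forcing chain starting at `b` -/
noncomputable def chain (b : V) (t : ℕ) : V := (chd G B)^[t] b

lemma chain_zero (b : V) : chain G B b 0 = b := rfl

lemma chain_succ (b : V) (t : ℕ) : chain G B b (t + 1) = chd G B (chain G B b t) :=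
  Function.iterate_succ_apply' _ _ _

lemma exists_fixed (hK : Set.univ ⊆ iter (ZFValid G Set.univ) B K) (b : V) :
    ∃ t, chd G B (chain G B b t) = chain G B b t := by
  by_contra h
  push_neg at h
  have key : ∀ t, t ≤ tau G B (chain G B b t) := by
    intro t
    induction t with
    | zero => exact Nat.zero_le _
    | succ t ih =>
      have h1 := (chd_spec G B hK (h t)).2.2.1
      rw [← chain_succ] at h1
      omega
  have := key (K + 1)
  have := tau_le_K G B hK (chain G B b (K + 1))
  omega

/-- length (number of forces) of the chain starting at `b` -/
noncomputable def clen (b : V) : ℕ := sInf {t | chd G B (chain G B b t) = chain G B b t}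

lemma clen_fixed (hK : Set.univ ⊆ iter (ZFValid G Set.univ) B K) (b : V) :
    chd G B (chain G B b (clen G B b)) = chain G B b (clen G B b) :=
  Nat.sInf_mem (exists_fixed G B hK b)

lemma clen_not_fixed {b : V} {t : ℕ} (ht : t < clen G B b) :
    chd G B (chain G B b t) ≠ chain G B b t :=
  Nat.notMem_of_lt_sInf ht

lemma tau_chain_lt (hK : Set.univ ⊆ iter (ZFValid G Set.univ) B K) {b : V} {t : ℕ}
    (ht : t < clen G B b) :
    tau G B (chain G B b t) < tau G B (chain G B b (t + 1)) := by
  have := (chd_spec G B hK (clen_not_fixed G B ht)).2.2.1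
  rwa [← chain_succ] at this

lemma tau_chain_strict (hK : Set.univ ⊆ iter (ZFValid G Set.univ) B K) {b : V} {s t : ℕ}
    (hst : s < t) (ht : t ≤ clen G B b) :
    tau G B (chain G B b s) < tau G B (chain G B b t) := by
  induction t with
  | zero => omega
  | succ t ih =>
    have hlast : tau G B (chain G B b t) < tau G B (chain G B b (t + 1)) :=
      tau_chain_lt G B hK (by omega)
    rcases Nat.lt_or_ge s t with h' | h'
    · exact lt_trans (ih h' (by omega)) hlast
    · have : s = t := by omega
      subst this; exact hlast

lemma chain_notB (hK : Set.univ ⊆ iter (ZFValid G Set.univ) B K) {b : V} {t : ℕ}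
    (ht : 0 < t) (ht' : t ≤ clen G B b) : chain G B b t ∉ B := by
  obtain ⟨t', rfl⟩ : ∃ t', t = t' + 1 := ⟨t - 1, by omega⟩
  rw [chain_succ]
  exact (chd_spec G B hK (clen_not_fixed G B (by omega))).1

lemma chain_par (hK : Set.univ ⊆ iter (ZFValid G Set.univ) B K) {b : V} {t : ℕ}
    (ht : t < clen G B b) : par G B (chain G B b (t + 1)) = chain G B b t := by
  rw [chain_succ]
  exact (chd_spec G B hK (clen_not_fixed G B ht)).2.1

lemma chain_inj (hK : Set.univ ⊆ iter (ZFValid G Set.univ) B K) :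
    ∀ (j : ℕ) {b b' : V} (j' : ℕ), b ∈ B → b' ∈ B → j ≤ clen G B b → j' ≤ clen G B b' →
      chain G B b j = chain G B b' j' → b = b' ∧ j = j' := by
  intro j
  induction j with
  | zero =>
    intro b b' j' hb hb' _ hj' heq
    rcases Nat.eq_zero_or_pos j' with h0 | h0
    · subst h0; exact ⟨heq, rfl⟩
    · exact absurd (heq ▸ hb) (chain_notB G B hK h0 hj')
  | succ j ih =>
    intro b b' j' hb hb' hj hj' heq
    rcases Nat.eq_zero_or_pos j' with h0 | h0
    · subst h0
      exact absurd (heq.symm ▸ hb') (chain_notB G B hK (Nat.succ_pos j) hj)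
    · obtain ⟨j'', rfl⟩ : ∃ j'', j' = j'' + 1 := ⟨j' - 1, by omega⟩
      have hp1 := chain_par G B hK (show j < clen G B b by omega)
      have hp2 := chain_par G B hK (show j'' < clen G B b' by omega)
      rw [heq, hp2] at hp1
      obtain ⟨e1, e2⟩ := ih j'' hb hb' (by omega) (by omega) hp1.symm
      exact ⟨e1, by omega⟩

lemma chain_cover (hK : Set.univ ⊆ iter (ZFValid G Set.univ) B K) (v : V) :
    ∃ b ∈ B, ∃ j ≤ clen G B b, chain G B b j = v := by
  suffices H : ∀ n (v : V), tau G B v = n → ∃ b ∈ B, ∃ j ≤ clen G B b, chain G B b j = v from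
    H (tau G B v) v rfl
  intro n
  induction n using Nat.strong_induction_on with
  | _ n ih =>
    intro v hn
    by_cases hv : v ∈ B
    · exact ⟨v, hv, 0, Nat.zero_le _, rfl⟩
    · have hlt := tau_par_lt G B hK hv
      obtain ⟨b, hb, j, hj, hcj⟩ := ih (tau G B (par G B v)) (by omega) (par G B v) rfl
      have hchd : chd G B (chain G B b j) = v := hcj ▸ chd_eq G B hK hv rfl
      have hne : j ≠ clen G B b := by
        intro h
        rw [h] at hchd
        rw [clen_fixed G B hK b] at hchd
        rw [← h, hcj] at hchd
        rw [hchd] at hlt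
        exact lt_irrefl _ hlt
      refine ⟨b, hb, j + 1, by omega, ?_⟩
      rw [chain_succ, hchd]

lemma chain_adj (hK : Set.univ ⊆ iter (ZFValid G Set.univ) B K) {b : V} {t : ℕ}
    (ht : t < clen G B b) : G.Adj (chain G B b t) (chain G B b (t + 1)) := by
  rw [chain_succ]
  exact (chd_spec G B hK (clen_not_fixed G B ht)).2.2.2.2.2.2.2.1

lemma chain_not_adj (hK : Set.univ ⊆ iter (ZFValid G Set.univ) B K) {b : V} {j j' : ℕ}
    (h2 : j + 2 ≤ j') (hj' : j' ≤ clen G B b) :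
    ¬ G.Adj (chain G B b j) (chain G B b j') := by
  intro hadj
  have hval := (chd_spec G B hK (clen_not_fixed G B (show j < clen G B b by omega))).2.2.2
  rw [← chain_succ] at hval
  have htlt : tau G B (chain G B b (j + 1)) < tau G B (chain G B b j') :=
    tau_chain_strict G B hK (by omega) hj'
  have := hval.2.2.2.2.2 (chain G B b j') (Set.mem_univ _) hadj
    (notMem_of_lt_tau G B (by omega))
  rw [this] at htlt
  omega

lemma chain_cross (hK : Set.univ ⊆ iter (ZFValid G Set.univ) B K) {b b' : V} {j j' : ℕ}
    (hb : b ∈ B) (hb' : b' ∈ B) (hbb : b ≠ b')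
    (hj : j < clen G B b) (hj' : j' ≤ clen G B b')
    (hadj : G.Adj (chain G B b j) (chain G B b' j'))
    (hτ : tau G B (chain G B b (j + 1)) ≤ tau G B (chain G B b' j')) : False := by
  have hval := (chd_spec G B hK (clen_not_fixed G B hj)).2.2.2
  rw [← chain_succ] at hval
  have hpos : 0 < tau G B (chain G B b (j + 1)) :=
    tau_pos G B hK (chain_notB G B hK (Nat.succ_pos j) hj)
  have := hval.2.2.2.2.2 (chain G B b' j') (Set.mem_univ _) hadj
    (notMem_of_lt_tau G B (by omega))
  exact hbb (chain_inj G B hK (j + 1) j' hb hb' hj hj' this.symm).1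

/-- upper end of the time-block of the `j`-th vertex of the chain of `b` -/
noncomputable def ub (K : ℕ) (b : V) (j : ℕ) : ℕ :=
  if j + 1 ≤ clen G B b then tau G B (chain G B b (j + 1)) - 1 else K

lemma lo_le_ub (hK : Set.univ ⊆ iter (ZFValid G Set.univ) B K) {b : V} {j : ℕ}
    (hj : j ≤ clen G B b) : tau G B (chain G B b j) ≤ ub G B K b j := by
  rw [ub]
  split_ifs with h
  · have := tau_chain_lt G B hK (show j < clen G B b by omega)
    omega
  · exact tau_le_K G B hK _

lemma ub_le_K (hK : Set.univ ⊆ iter (ZFValid G Set.univ) B K) {b : V} {j : ℕ} :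
    ub G B K b j ≤ K := by
  rw [ub]
  split_ifs with h
  · have := tau_le_K G B hK (chain G B b (j + 1))
    omega
  · exact le_rfl

lemma ub_lt_lo (hK : Set.univ ⊆ iter (ZFValid G Set.univ) B K) {b : V} {j j' : ℕ}
    (h : j < j') (hj' : j' ≤ clen G B b) :
    ub G B K b j < tau G B (chain G B b j') := by
  have h1 : j + 1 ≤ clen G B b := by omega
  rw [ub, if_pos h1]
  have hpos : 0 < tau G B (chain G B b (j + 1)) :=
    tau_pos G B hK (chain_notB G B hK (Nat.succ_pos j) h1)
  rcases Nat.lt_or_ge (j + 1) j' with h' | h'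
  · have := tau_chain_strict G B hK h' hj'
    omega
  · have : j + 1 = j' := by omega
    subst this
    omega

lemma cross_bound (hK : Set.univ ⊆ iter (ZFValid G Set.univ) B K) {b b' : V} {j j' : ℕ}
    (hb : b ∈ B) (hb' : b' ∈ B) (hbb : b ≠ b')
    (hj : j ≤ clen G B b) (hj' : j' ≤ clen G B b')
    (hadj : G.Adj (chain G B b j) (chain G B b' j')) :
    tau G B (chain G B b' j') ≤ ub G B K b j := by
  by_contra hcon
  push_neg at hcon
  have hK' := tau_le_K G B hK (chain G B b' j')
  have h1 : j + 1 ≤ clen G B b := by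
    by_contra h1
    rw [ub, if_neg h1] at hcon
    omega
  rw [ub, if_pos h1] at hcon
  exact chain_cross G B hK hb hb' hbb (show j < clen G B b by omega) hj' hadj (by omega)

lemma pip_of_enum (hK : Set.univ ⊆ iter (ZFValid G Set.univ) B K) {m : ℕ}
    (b : Fin m → V) (hbinj : Function.Injective b) (hbr : Set.range b = B) :
    ∃ (n : Fin m → ℕ) (vtx : (i : Fin m) → Fin (n i) → V), IsPIP G m n vtx := by
  classical
  have hbB : ∀ i, b i ∈ B := fun i => hbr ▸ Set.mem_range_self i
  refine ⟨fun i => clen G B (b i) + 1, fun i j => chain G B (b i) (j : ℕ), ?_, ?_⟩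
  · constructor
    · exact fun i => Nat.succ_pos _
    · rintro ⟨i, j⟩ ⟨i', j'⟩ h
      simp only at h
      obtain ⟨hb, hj⟩ := chain_inj G B hK (j : ℕ) (j' : ℕ) (hbB i) (hbB i')
        (Nat.lt_succ_iff.mp j.isLt) (Nat.lt_succ_iff.mp j'.isLt) h
      have hii : i = i' := hbinj hb
      subst hii
      simp only [Sigma.mk.inj_iff, heq_eq_eq]
      exact ⟨trivial, Fin.ext hj⟩
    · intro v
      obtain ⟨bb, hbb, j, hj, hc⟩ := chain_cover G B hK v
      rw [← hbr] at hbb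
      obtain ⟨i, rfl⟩ := hbb
      exact ⟨i, ⟨j, Nat.lt_succ_iff.mpr hj⟩, hc⟩
    · intro i j j'
      have hl1 : (j:ℕ) ≤ clen G B (b i) := Nat.lt_succ_iff.mp j.isLt
      have hl2 : (j':ℕ) ≤ clen G B (b i) := Nat.lt_succ_iff.mp j'.isLt
      constructor
      · intro hadj
        rcases lt_trichotomy (j : ℕ) (j' : ℕ) with hlt | heq | hgt
        · left
          by_contra hne
          exact chain_not_adj G B hK (show (j:ℕ) + 2 ≤ (j':ℕ) by omega) (by omega) hadj
        · exfalso
          have : chain G B (b i) (j : ℕ) = chain G B (b i) (j' : ℕ) := by rw [heq]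
          rw [this] at hadj
          exact G.irrefl hadj
        · right
          by_contra hne
          exact chain_not_adj G B hK (show (j':ℕ) + 2 ≤ (j:ℕ) by omega) (by omega) hadj.symm
      · rintro (h | h)
        · have := chain_adj G B hK (show (j:ℕ) < clen G B (b i) by omega)
          rwa [h] at this
        · have := chain_adj G B hK (show (j':ℕ) < clen G B (b i) by omega)
          rw [h] at this
          exact this.symm
  · refine ⟨K, fun i j => Finset.Icc (tau G B (chain G B (b i) (j : ℕ))) (ub G B K (b i) (j : ℕ)),
      ?_, ?_, ?_, ?_, ?_⟩
    · intro i j z hz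
      rw [Finset.mem_Icc] at hz
      have := ub_le_K G B hK (b := b i) (j := (j : ℕ))
      rw [Finset.mem_range]
      omega
    · intro i j
      exact Finset.nonempty_Icc.mpr (lo_le_ub G B hK (Nat.lt_succ_iff.mp j.isLt))
    · intro i x hx
      rw [Finset.mem_range] at hx
      have hP0 : tau G B (chain G B (b i) 0) ≤ x := by
        rw [chain_zero, tau_of_mem_B G B (hbB i)]
        omega
      set c := clen G B (b i) with hc
      set jm := Nat.findGreatest (fun t => tau G B (chain G B (b i) t) ≤ x) c with hjm
      have hjmle : jm ≤ c := Nat.findGreatest_le c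
      have hjmP : tau G B (chain G B (b i) jm) ≤ x :=
        Nat.findGreatest_spec (P := fun t => tau G B (chain G B (b i) t) ≤ x) (Nat.zero_le c) hP0
      have hub : x ≤ ub G B K (b i) jm := by
        rw [ub]
        split_ifs with h
        · have := Nat.findGreatest_is_greatest (P := fun t => tau G B (chain G B (b i) t) ≤ x)
            (n := c) (k := jm + 1) (by omega) h
          simp only [not_le] at this
          omega
        · omega
      refine ⟨⟨jm, Nat.lt_succ_iff.mpr hjmle⟩, Finset.mem_Icc.mpr ⟨hjmP, hub⟩, ?_⟩
      intro j2 h2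
      rw [Finset.mem_Icc] at h2
      apply Fin.ext
      have hj2 : (j2:ℕ) ≤ c := Nat.lt_succ_iff.mp j2.isLt
      rcases lt_trichotomy (j2 : ℕ) jm with hlt | heq | hgt
      · exfalso
        have := ub_lt_lo G B hK hlt hjmle
        omega
      · exact heq
      · exfalso
        have := ub_lt_lo G B hK hgt hj2
        omega
    · intro i j j' hlt x hx y hy
      rw [Finset.mem_Icc] at hx hy
      have := ub_lt_lo G B hK hlt (Nat.lt_succ_iff.mp j'.isLt)
      omega
    · intro i i' j j' hne hadj
      have hbne : b i ≠ b i' := fun h => hne (hbinj h)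
      have h1 : tau G B (chain G B (b i') (j' : ℕ)) ≤ ub G B K (b i) (j : ℕ) :=
        cross_bound G B hK (hbB i) (hbB i') hbne (Nat.lt_succ_iff.mp j.isLt)
          (Nat.lt_succ_iff.mp j'.isLt) hadj
      have h2 : tau G B (chain G B (b i) (j : ℕ)) ≤ ub G B K (b i') (j' : ℕ) :=
        cross_bound G B hK (hbB i') (hbB i) hbne.symm (Nat.lt_succ_iff.mp j'.isLt)
          (Nat.lt_succ_iff.mp j.isLt) hadj.symm
      refine ⟨max (tau G B (chain G B (b i) (j : ℕ))) (tau G B (chain G B (b i') (j' : ℕ))), ?_⟩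
      rw [Finset.mem_inter, Finset.mem_Icc, Finset.mem_Icc]
      have l1 := lo_le_ub G B hK (b := b i) (Nat.lt_succ_iff.mp j.isLt)
      have l2 := lo_le_ub G B hK (b := b i') (Nat.lt_succ_iff.mp j'.isLt)
      omega

lemma exists_PIP_of_forcing (hf : IsForcingSet (ZFValid G Set.univ) Set.univ B) :
    ∃ (m : ℕ) (n : Fin m → ℕ) (vtx : (i : Fin m) → Fin (n i) → V),
      IsPIP G m n vtx ∧ m = B.ncard := by
  obtain ⟨-, K, hK⟩ := hf
  obtain ⟨k, f, hfr⟩ := (Set.toFinite B).fin_embedding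
  have hk : k = B.ncard := by
    rw [← hfr, ← Nat.card_coe_set_eq, Nat.card_range_of_injective f.injective,
      Nat.card_eq_fintype_card, Fintype.card_fin]
  obtain ⟨n, vtx, h⟩ := pip_of_enum G B hK (fun i => f i) f.injective hfr
  exact ⟨k, n, vtx, h, hk⟩

end main

section dir2
variable (G : SimpleGraph V)

lemma Z_le_of_PIP {m : ℕ} {n : Fin m → ℕ} {vtx : (i : Fin m) → Fin (n i) → V}
    (h : IsPIP G m n vtx) : Z G ≤ m := by
  classical
  obtain ⟨hpc, K, A, hw⟩ := h
  set B0 : Set V := Set.range (fun i => vtx i ⟨0, hpc.pos i⟩) with hB0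
  have h0mem : ∀ i, 0 ∈ A i ⟨0, hpc.pos i⟩ := by
    intro i
    obtain ⟨j1, hj1, -⟩ := hw.partition i 0 (Finset.mem_range.mpr (Nat.succ_pos K))
    rcases Nat.eq_zero_or_pos (j1 : ℕ) with h0 | h0
    · have : j1 = ⟨0, hpc.pos i⟩ := Fin.ext h0
      rwa [← this]
    · exfalso
      obtain ⟨y, hy⟩ := hw.nonempty i ⟨0, hpc.pos i⟩
      exact absurd (hw.mono i ⟨0, hpc.pos i⟩ j1 h0 y hy 0 hj1) (by omega)
  have hAK : ∀ i j x, x ∈ A i j → x ≤ K := fun i j x hx =>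
    Nat.lt_succ_iff.mp (Finset.mem_range.mp (hw.mem i j hx))
  have main : ∀ t (i : Fin m) (j : Fin (n i)), (∃ x ∈ A i j, x ≤ t) →
      vtx i j ∈ iter (ZFValid G Set.univ) B0 t := by
    intro t
    induction t with
    | zero =>
      rintro i j ⟨x, hx, hxle⟩
      have hx0 : (0:ℕ) ∈ A i j := by
        have hx' : x = 0 := by omega
        rwa [hx'] at hx
      have hj0 : (j : ℕ) = 0 := by
        by_contra hne
        obtain ⟨y, hy⟩ := hw.nonempty i ⟨0, hpc.pos i⟩
        exact absurd (hw.mono i ⟨0, hpc.pos i⟩ j (by show (0:ℕ) < (j:ℕ); omega) y hy 0 hx0) (by omega)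
      have hj : j = ⟨0, hpc.pos i⟩ := Fin.ext hj0
      rw [hj, iter_zero]
      exact Set.mem_range_self i
    | succ t ih =>
      rintro i j ⟨x, hx, hxle⟩
      by_cases hblue : vtx i j ∈ iter (ZFValid G Set.univ) B0 t
      · exact iter_mono _ _ (Nat.le_succ t) hblue
      by_cases hex : ∃ x' ∈ A i j, x' ≤ t
      · exact absurd (ih i j hex) hblue
      push_neg at hex
      have hxt : x = t + 1 := by
        have := hex x hx
        omega
      subst hxt
      have hj0 : 0 < (j : ℕ) := by
        rcases Nat.eq_zero_or_pos (j:ℕ) with h0 | h0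
        · exfalso
          have hj : j = ⟨0, hpc.pos i⟩ := Fin.ext h0
          exact absurd (hex 0 (hj ▸ h0mem i)) (by omega)
        · exact h0
      have htK : t + 1 ≤ K := hAK i j _ hx
      obtain ⟨j'', hj''t, -⟩ := hw.partition i t (Finset.mem_range.mpr (by omega))
      have hjj : (j'' : ℕ) + 1 = (j : ℕ) := by
        have hlt : (j'' : ℕ) < (j : ℕ) := by
          rcases lt_trichotomy ((j'':ℕ)) ((j:ℕ)) with hc | hc | hc
          · exact hc
          · exfalso
            have hfe : j'' = j := Fin.ext hc
            subst hfe
            exact absurd (hex t hj''t) (by omega)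
          · exact absurd (hw.mono i j j'' hc _ hx _ hj''t) (by omega)
        by_contra hne
        have hmid : (j'' : ℕ) + 1 < n i := by
          have := j.isLt
          omega
        obtain ⟨y, hy⟩ := hw.nonempty i ⟨(j'':ℕ)+1, hmid⟩
        have h1 := hw.mono i j'' ⟨(j'':ℕ)+1, hmid⟩ (by show (j'':ℕ) < (j'':ℕ)+1; omega) t hj''t y hy
        have h2 := hw.mono i ⟨(j'':ℕ)+1, hmid⟩ j (by show (j'':ℕ)+1 < (j:ℕ); omega) y hy _ hx
        omega
      have hu : vtx i j'' ∈ iter (ZFValid G Set.univ) B0 t := ih i j'' ⟨t, hj''t, le_rfl⟩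
      rw [iter_succ]
      right
      refine ⟨vtx i j'', Set.mem_univ _, Set.mem_univ _, hu, hblue, ?_, ?_⟩
      · exact (hpc.induced i j'' j).mpr (Or.inl hjj)
      · intro w _ hadj hwhite
        obtain ⟨i2, j2, rfl⟩ := hpc.cover w
        by_cases hii : i2 = i
        · subst hii
          rcases (hpc.induced i2 j'' j2).mp hadj with hc | hc
          · have hfe : j2 = j := Fin.ext (by omega)
            rw [hfe]
          · exfalso
            obtain ⟨y, hy⟩ := hw.nonempty i2 j2
            have := hw.mono i2 j2 j'' (by omega) y hy t hj''t
            exact hwhite (ih i2 j2 ⟨y, hy, by omega⟩)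
        · exfalso
          obtain ⟨z, hz⟩ := hw.edge i i2 j'' j2 (fun hcc => hii hcc.symm) hadj
          rw [Finset.mem_inter] at hz
          have hzt : z < t + 1 := hw.mono i j'' j (by omega) z hz.1 (t+1) hx
          exact hwhite (ih i2 j2 ⟨z, hz.2, by omega⟩)
  have hforce : IsForcingSet (ZFValid G Set.univ) Set.univ B0 := by
    refine ⟨Set.subset_univ _, K, ?_⟩
    intro v _
    obtain ⟨i, j, rfl⟩ := hpc.cover v
    obtain ⟨x, hxA⟩ := hw.nonempty i j
    exact main K i j ⟨x, hxA, hAK i j x hxA⟩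
  have hinj : Function.Injective (fun i : Fin m => vtx i ⟨0, hpc.pos i⟩) := by
    intro a a' hh
    have h2 := hpc.inj (a₁ := ⟨a, ⟨0, hpc.pos a⟩⟩) (a₂ := ⟨a', ⟨0, hpc.pos a'⟩⟩) hh
    exact congrArg Sigma.fst h2
  have hcard : B0.ncard = m := by
    rw [hB0, ← Nat.card_coe_set_eq, Nat.card_range_of_injective hinj,
      Nat.card_eq_fintype_card, Fintype.card_fin]
  exact Nat.sInf_le ⟨B0, hcard, hforce⟩

lemma trivial_PIP : ∃ (n : Fin (Fintype.card V) → ℕ)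
    (vtx : (i : Fin (Fintype.card V)) → Fin (n i) → V),
    IsPIP G (Fintype.card V) n vtx := by
  classical
  refine ⟨fun _ => 1, fun i _ => (Fintype.equivFin V).symm i,
    ⟨fun _ => one_pos, ?_, ?_, ?_⟩, 0, fun _ _ => {0}, ?_, ?_, ?_, ?_, ?_⟩
  · rintro ⟨i, j⟩ ⟨i', j'⟩ hh
    simp only at hh
    have hi : i = i' := (Fintype.equivFin V).symm.injective hh
    subst hi
    have hj : j = j' := Subsingleton.elim j j'
    rw [hj]
  · intro v
    exact ⟨(Fintype.equivFin V) v, ⟨0, one_pos⟩, by simp⟩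
  · intro i j j'
    constructor
    · intro hadj
      exact absurd hadj (G.irrefl)
    · rintro (hh | hh)
      · exact absurd hh (by have := j'.isLt; omega)
      · exact absurd hh (by have := j.isLt; omega)
  · intro i j z hz
    simp only [Finset.mem_singleton] at hz
    simp [hz]
  · intro i j
    exact ⟨0, by simp⟩
  · intro i x hx
    rw [Finset.mem_range] at hx
    refine ⟨⟨0, one_pos⟩, by simp [show x = 0 by omega], fun y _ => Subsingleton.elim _ _⟩
  · intro i j j' hlt
    exact absurd hlt (by have := j.isLt; have := j'.isLt; omega)
  · intro i i' j j' _ _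
    exact ⟨0, by simp⟩

end dir2

end ZFP


/-- For every finite simple graph, the minimum cardinality of a parallel increasing path
cover equals the zero forcing number. -/
theorem PIP_eq_Z {V : Type*} [Fintype V] [DecidableEq V] (G : SimpleGraph V) :
    sInf {m : ℕ | ∃ (n : Fin m → ℕ) (vtx : (i : Fin m) → Fin (n i) → V),
        ZF.IsPIP G m n vtx}
      = ZF.Z G := by
  classical
  apply le_antisymm
  · have hne : {n | ∃ B : Set V, B.ncard = n ∧
        ZF.IsForcingSet (ZF.ZFValid G Set.univ) Set.univ B}.Nonempty :=
      ⟨(Set.univ : Set V).ncard, Set.univ, rfl, Set.subset_univ _, 0, subset_rfl⟩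
    have hmem : ∃ B : Set V, B.ncard = ZF.Z G ∧
        ZF.IsForcingSet (ZF.ZFValid G Set.univ) Set.univ B := Nat.sInf_mem hne
    obtain ⟨B, hBc, hBf⟩ := hmem
    obtain ⟨m, n, vtx, hpip, hm⟩ := ZFP.exists_PIP_of_forcing G B hBf
    have hmm : m ∈ {m : ℕ | ∃ (n : Fin m → ℕ) (vtx : (i : Fin m) → Fin (n i) → V),
        ZF.IsPIP G m n vtx} := ⟨n, vtx, hpip⟩
    have h2 := Nat.sInf_le hmm
    rw [hm, hBc] at h2
    exact h2
  · apply le_csInf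
    · exact ⟨Fintype.card V, ZFP.trivial_PIP G⟩
    · rintro m ⟨n, vtx, hpip⟩
      exact ZFP.Z_le_of_PIP G hpip
end

section
/- A collection Q of induced paths is a parallel increasing path cover of a graph G if and only if Q is the chain set of some relaxed chronology of standard zero forces for some zero forcing set B of G. -/
set_option linter.unusedSectionVars false in
theorem ZF.expand_subset_succ {V : Type*} (B : Set V) (F : ℕ → Set (V × V)) (k : ℕ) :
    ZF.expand B F k ⊆ ZF.expand B F (k+1) := Set.subset_union_left

theorem ZF.expand_mono {V : Type*} (B : Set V) (F : ℕ → Set (V × V)) :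
    Monotone (ZF.expand B F) :=
  monotone_nat_of_le_succ (ZF.expand_subset_succ B F)

/-- A path cover `Q` (of induced paths) is a parallel increasing path cover of `G` if and
only if `Q` is the chain set of some relaxed chronology of standard zero forces for some
zero forcing set `B` of `G` (namely the set of first vertices of the paths). -/
theorem PIP_iff_chainSet {V : Type*} [Fintype V] [DecidableEq V] (G : SimpleGraph V)
    (m : ℕ) (n : Fin m → ℕ) (vtx : (i : Fin m) → Fin (n i) → V)
    (hQ : ZF.IsPathCover G m n vtx) :
    ZF.IsPIP G m n vtx ↔
      ∃ (B : Set V) (K : ℕ) (F : ℕ → Set (V × V)),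
        B = {v | ∃ i, ∃ (h : 0 < n i), vtx i ⟨0, h⟩ = v} ∧
        ZF.RelaxedChron (ZF.ZFValid G Set.univ) Set.univ B K F ∧
        ZF.IsChainSetOf m n vtx F K := by

  classical
  open ZF in
  have hinj : ∀ {i i' : Fin m} {j : Fin (n i)} {j' : Fin (n i')},
      vtx i j = vtx i' j' → i = i' ∧ (j:ℕ) = (j':ℕ) := by
    intro i i' j j' h
    have h2 : (⟨i,j⟩ : (i:Fin m) × Fin (n i)) = ⟨i',j'⟩ := hQ.inj h
    obtain ⟨h3, h4⟩ := Sigma.mk.inj_iff.mp h2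
    subst h3
    exact ⟨rfl, congrArg Fin.val (eq_of_heq h4)⟩
  constructor
  · rintro ⟨-, K, A, W⟩
    set B : Set V := {v | ∃ i, ∃ h : 0 < n i, vtx i ⟨0, h⟩ = v} with hB
    set tm : (i : Fin m) → Fin (n i) → ℕ := fun i j => (A i j).min' (W.nonempty i j) with htm
    have htm_mem : ∀ i j, tm i j ∈ A i j := fun i j => (A i j).min'_mem _
    have htm_le : ∀ i j, ∀ x ∈ A i j, tm i j ≤ x := fun i j x hx => (A i j).min'_le x hx
    have htm_leK : ∀ i j, tm i j ≤ K := by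
      intro i j
      have := W.mem i j (htm_mem i j)
      simpa [Nat.lt_succ_iff] using Finset.mem_range.mp this
    have hzero : ∀ i (j : Fin (n i)), (j:ℕ) = 0 → tm i j = 0 := by
      intro i j hj
      have h0 : (0:ℕ) ∈ Finset.range (K+1) := by simp
      obtain ⟨j₀, hj₀, -⟩ := W.partition i 0 h0
      rcases Nat.eq_zero_or_pos (j₀ : ℕ) with h | h
      · have hjj : j₀ = j := Fin.ext (by omega)
        subst hjj
        exact Nat.le_zero.mp (htm_le i j₀ 0 hj₀)
      · exfalso
        have := W.mono i j j₀ (by omega) _ (htm_mem i j) 0 hj₀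
        omega
    have hpos : ∀ i (j : Fin (n i)), 0 < (j:ℕ) → 0 < tm i j := by
      intro i j hj
      by_contra h
      push_neg at h
      have h0 : (0:ℕ) ∈ A i j := by
        have : tm i j = 0 := by omega
        rw [← this]; exact htm_mem i j
      have := W.mono i ⟨0, j.pos⟩ j (by simpa using hj) _ (htm_mem i ⟨0, j.pos⟩) 0 h0
      omega
    set F : ℕ → Set (V × V) := fun k =>
      {p | ∃ (i : Fin m) (j j' : Fin (n i)), p.1 = vtx i j ∧ p.2 = vtx i j' ∧
        (j:ℕ) + 1 = (j':ℕ) ∧ tm i j' = k} with hF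
    have hexp : ∀ k, expand B F k = {v | ∃ i j, vtx i j = v ∧ tm i j ≤ k} := by
      intro k
      induction k with
      | zero =>
        ext v
        show v ∈ B ↔ _
        constructor
        · rintro ⟨i, h, rfl⟩
          exact ⟨i, ⟨0,h⟩, rfl, by rw [hzero i ⟨0,h⟩ rfl]⟩
        · rintro ⟨i, j, rfl, hle⟩
          have hj : (j:ℕ) = 0 := by
            by_contra hc
            have := hpos i j (by omega)
            omega
          exact ⟨i, j.pos, congrArg (vtx i) (Fin.ext hj.symm)⟩
      | succ k ih =>
        ext v
        show v ∈ expand B F k ∪ {v | ∃ u, (u, v) ∈ F (k+1)} ↔ _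
        constructor
        · rintro (h | ⟨u, i, j, j', h1, h2, h3, h4⟩)
          · rw [ih] at h
            obtain ⟨i, j, rfl, hle⟩ := h
            exact ⟨i, j, rfl, by omega⟩
          · exact ⟨i, j', h2.symm, by omega⟩
        · rintro ⟨i, j, rfl, hle⟩
          rcases Nat.lt_or_ge (tm i j) (k+1) with h | h
          · left; rw [ih]; exact ⟨i, j, rfl, by omega⟩
          · right
            have hjpos : 0 < (j:ℕ) := by
              by_contra hc
              have := hzero i j (by omega)
              omega
            refine ⟨vtx i ⟨(j:ℕ)-1, by omega⟩, i, ⟨(j:ℕ)-1, by omega⟩, j, rfl, rfl, ?_, by omega⟩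
            show (j:ℕ) - 1 + 1 = (j:ℕ)
            omega
    refine ⟨B, K, F, rfl, ⟨fun _ _ => trivial, ?_, ?_, ?_, ?_, ?_⟩, ?_⟩
    · -- init
      ext p
      simp only [hF, Set.mem_setOf_eq, Set.mem_empty_iff_false, iff_false]
      rintro ⟨i, j, j', -, -, h3, h4⟩
      have := hpos i j' (by omega)
      omega
    · -- bound
      intro k hk
      ext p
      simp only [hF, Set.mem_setOf_eq, Set.mem_empty_iff_false, iff_false]
      rintro ⟨i, j, j', -, -, -, h4⟩
      have := htm_leK i j'
      omega
    · -- forcesValid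
      rintro k hk u v ⟨i, j, j', h1, h2, h3, h4⟩
      simp only at h1 h2
      subst h1; subst h2
      have hujlt : tm i j < tm i j' := W.mono i j j' (by omega) _ (htm_mem i j) _ (htm_mem i j')
      refine ⟨trivial, trivial, ?_, ?_, (hQ.induced i j j').mpr (Or.inl h3), ?_⟩
      · rw [hexp]
        exact ⟨i, j, rfl, by omega⟩
      · rw [hexp]
        rintro ⟨i'', j'', hv, hle⟩
        obtain ⟨rfl, hval⟩ := hinj hv
        have : j'' = j' := Fin.ext hval
        subst this
        omega
      · intro w _ hadj hwhite
        obtain ⟨i'', j'', rfl⟩ := hQ.cover w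
        by_cases hii : i'' = i
        · subst hii
          rcases (hQ.induced i'' j j'').mp hadj with hc | hc
          · exact congrArg (vtx i'') (Fin.ext (by omega))
          · exfalso
            apply hwhite
            rw [hexp]
            refine ⟨i'', j'', rfl, ?_⟩
            have := W.mono i'' j'' j (by omega) _ (htm_mem i'' j'') _ (htm_mem i'' j)
            omega
        · exfalso
          obtain ⟨x, hx⟩ := W.edge i i'' j j'' (fun h => hii h.symm) hadj
          rw [Finset.mem_inter] at hx
          apply hwhite
          rw [hexp]
          refine ⟨i'', j'', rfl, ?_⟩
          have h5 := htm_le i'' j'' x hx.2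
          have h6 := W.mono i j j' (by omega) x hx.1 _ (htm_mem i j')
          omega
    · -- uniqueForcer
      rintro k u₁ u₂ v ⟨i, j, j', h1, h2, h3, h4⟩ ⟨i₂, j₂, j₂', g1, g2, g3, g4⟩
      simp only at h1 h2 g1 g2
      subst h1; subst g1
      have hv : vtx i j' = vtx i₂ j₂' := by rw [← h2, ← g2]
      obtain ⟨rfl, hval⟩ := hinj hv
      exact congrArg (vtx i) (Fin.ext (by omega))
    · -- complete
      intro v _
      rw [hexp]
      obtain ⟨i, j, rfl⟩ := hQ.cover v
      exact ⟨i, j, rfl, htm_leK i j⟩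
    · -- chain set
      intro u w
      constructor
      · rintro ⟨k, hk1, hkK, i, j, j', h1, h2, h3, h4⟩
        exact ⟨i, j, j', h1, h2, h3⟩
      · rintro ⟨i, j, j', rfl, rfl, hc⟩
        refine ⟨tm i j', hpos i j' (by omega), htm_leK i j', i, j, j', rfl, rfl, hc, rfl⟩
  · rintro ⟨B, K, F, hB, hRC, hCS⟩
    refine ⟨hQ, K, ?_⟩
    have hVexp : ∀ v : V, v ∈ expand B F K := fun v => hRC.complete trivial
    set tv : V → ℕ := fun v => sInf {k | v ∈ expand B F k} with htv
    have htv_spec : ∀ (v : V) (k : ℕ), v ∈ expand B F k ↔ tv v ≤ k := by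
      intro v k
      constructor
      · intro h; exact Nat.sInf_le h
      · intro h
        have hne : {k | v ∈ expand B F k}.Nonempty := ⟨K, hVexp v⟩
        exact expand_mono B F h (Nat.sInf_mem hne)
    have htv0 : ∀ (i : Fin m) (h : 0 < n i), tv (vtx i ⟨0,h⟩) = 0 := by
      intro i h
      have hm : vtx i ⟨0,h⟩ ∈ expand B F 0 := by
        show vtx i ⟨0,h⟩ ∈ B
        rw [hB]
        exact ⟨i, h, rfl⟩
      exact Nat.le_zero.mp ((htv_spec _ 0).mp hm)
    have htvK : ∀ v : V, tv v ≤ K := fun v => (htv_spec v K).mp (hVexp v)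
    have hstep : ∀ (i : Fin m) (j j' : Fin (n i)), (j:ℕ)+1 = (j':ℕ) →
        tv (vtx i j) < tv (vtx i j') ∧ 1 ≤ tv (vtx i j') ∧
        ZFValid G Set.univ (expand B F (tv (vtx i j') - 1)) (vtx i j) (vtx i j') := by
      intro i j j' hc
      have hf : (vtx i j, vtx i j') ∈ forcesOf F K := (hCS _ _).mpr ⟨i, j, j', rfl, rfl, hc⟩
      obtain ⟨k, hk1, hkK, hkF⟩ := hf
      obtain ⟨k', rfl⟩ : ∃ k'', k = k'' + 1 := ⟨k - 1, by omega⟩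
      have hvalid := hRC.forcesValid k' (by omega) _ _ hkF
      have hvmem : vtx i j' ∈ expand B F (k'+1) := Or.inr ⟨vtx i j, hkF⟩
      have hv_not : vtx i j' ∉ expand B F k' := hvalid.2.2.2.1
      have ht' : tv (vtx i j') = k' + 1 := by
        have h1 := (htv_spec _ (k'+1)).mp hvmem
        have h2 : ¬ tv (vtx i j') ≤ k' := fun h => hv_not ((htv_spec _ k').mpr h)
        omega
      have htu : tv (vtx i j) ≤ k' := (htv_spec _ k').mp hvalid.2.2.1
      refine ⟨by omega, by omega, ?_⟩
      rw [ht']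
      exact hvalid
    have hmono : ∀ (i : Fin m) (j j' : Fin (n i)), (j:ℕ) < (j':ℕ) →
        tv (vtx i j) < tv (vtx i j') := by
      intro i j j' hlt
      obtain ⟨a, ha⟩ := j
      obtain ⟨b, hb⟩ := j'
      simp only at hlt
      clear htv0
      induction b with
      | zero => omega
      | succ b ihb =>
        have hb' : b < n i := by omega
        have hs := (hstep i ⟨b, hb'⟩ ⟨b+1, hb⟩ rfl).1
        rcases Nat.lt_or_ge a b with h | h
        · exact lt_trans (ihb hb' h) hs
        · have : a = b := by omega
          subst this
          exact hs
    set A : (i : Fin m) → Fin (n i) → Finset ℕ := fun i j =>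
      (Finset.range (K+1)).filter
        (fun x => tv (vtx i j) ≤ x ∧ ∀ j' : Fin (n i), (j:ℕ) < (j':ℕ) → x < tv (vtx i j'))
      with hA
    have hmemA : ∀ i j x, x ∈ A i j ↔ x ≤ K ∧ tv (vtx i j) ≤ x ∧
        ∀ j' : Fin (n i), (j:ℕ) < (j':ℕ) → x < tv (vtx i j') := by
      intro i j x
      simp [hA, Nat.lt_succ_iff, and_assoc]
    have hselfA : ∀ i j, tv (vtx i j) ∈ A i j := by
      intro i j
      rw [hmemA]
      exact ⟨htvK _, le_refl _, fun j' h => hmono i j j' h⟩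
    have hedge : ∀ (i i' : Fin m) (j : Fin (n i)) (j' : Fin (n i')), i ≠ i' →
        G.Adj (vtx i j) (vtx i' j') → tv (vtx i j) ≤ tv (vtx i' j') →
        tv (vtx i' j') ∈ A i j ∩ A i' j' := by
      intro i i' j j' hne hadj hle
      rw [Finset.mem_inter]
      refine ⟨?_, hselfA i' j'⟩
      rw [hmemA]
      refine ⟨htvK _, hle, ?_⟩
      intro j'' hj''
      have hjs : (j:ℕ)+1 < n i := lt_of_le_of_lt (by omega) j''.isLt
      obtain ⟨hlt1, hge1, hzf⟩ := hstep i j ⟨(j:ℕ)+1, hjs⟩ rfl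
      have key : tv (vtx i' j') < tv (vtx i ⟨(j:ℕ)+1, hjs⟩) := by
        by_contra hcon
        push_neg at hcon
        have hw : vtx i' j' ∉ expand B F (tv (vtx i ⟨(j:ℕ)+1, hjs⟩) - 1) := by
          intro hmem
          have := (htv_spec _ _).mp hmem
          omega
        have heq := hzf.2.2.2.2.2 (vtx i' j') trivial hadj hw
        exact hne (hinj heq).1.symm
      have hjsle : tv (vtx i ⟨(j:ℕ)+1, hjs⟩) ≤ tv (vtx i j'') := by
        rcases Nat.lt_or_ge ((j:ℕ)+1) ((j'':ℕ)) with h | h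
        · exact le_of_lt (hmono i ⟨(j:ℕ)+1, hjs⟩ j'' (by show (j:ℕ)+1 < (j'':ℕ); omega))
        · have hjj : (⟨(j:ℕ)+1, hjs⟩ : Fin (n i)) = j'' := Fin.ext (by show (j:ℕ)+1 = (j'':ℕ); omega)
          rw [hjj]
      omega
    refine ⟨A, ?_, ?_, ?_, ?_, ?_⟩
    · intro i j
      exact Finset.filter_subset _ _
    · intro i j
      exact ⟨tv (vtx i j), hselfA i j⟩
    · intro i x hx
      rw [Finset.mem_range, Nat.lt_succ_iff] at hx
      obtain ⟨j, hjle, hjmax⟩ : ∃ j : Fin (n i), tv (vtx i j) ≤ x ∧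
          ∀ j' : Fin (n i), tv (vtx i j') ≤ x → (j':ℕ) ≤ (j:ℕ) := by
        have hS : ((Finset.univ : Finset (Fin (n i))).filter
            (fun j => tv (vtx i j) ≤ x)).Nonempty := by
          refine ⟨⟨0, hQ.pos i⟩, ?_⟩
          rw [Finset.mem_filter]
          exact ⟨Finset.mem_univ _, by rw [htv0 i (hQ.pos i)]; omega⟩
        refine ⟨Finset.max' _ hS, ?_, ?_⟩
        · have := Finset.max'_mem _ hS
          rw [Finset.mem_filter] at this
          exact this.2
        · intro j' hj'
          have hm : j' ∈ (Finset.univ : Finset (Fin (n i))).filter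
              (fun j => tv (vtx i j) ≤ x) := by
            rw [Finset.mem_filter]; exact ⟨Finset.mem_univ _, hj'⟩
          have h := Finset.le_max' _ j' hm
          exact h
      refine ⟨j, ?_, ?_⟩
      · show x ∈ A i j
        rw [hmemA]
        refine ⟨hx, hjle, ?_⟩
        intro j' hj'
        by_contra hcon
        push_neg at hcon
        have := hjmax j' hcon
        omega
      · intro j₁ hj₁
        have hj₁ : x ∈ A i j₁ := hj₁
        rw [hmemA] at hj₁
        by_contra hcon
        rcases Nat.lt_or_ge (j₁:ℕ) (j:ℕ) with h | h
        · have := hj₁.2.2 j h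
          omega
        · have h2 : (j:ℕ) < (j₁:ℕ) := by
            rcases Nat.lt_or_ge (j:ℕ) (j₁:ℕ) with h' | h'
            · exact h'
            · exact absurd (Fin.ext (by omega : (j₁:ℕ) = (j:ℕ))) hcon
          have := hjmax j₁ hj₁.2.1
          omega
    · intro i j j' hlt x hxA y hyA
      rw [hmemA] at hxA hyA
      have := hxA.2.2 j' hlt
      omega
    · intro i i' j j' hne hadj
      rcases le_total (tv (vtx i j)) (tv (vtx i' j')) with h | h
      · exact ⟨tv (vtx i' j'), hedge i i' j j' hne hadj h⟩
      · have := hedge i' i j' j hne.symm hadj.symm h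
        rw [Finset.inter_comm]
        exact ⟨tv (vtx i j), this⟩
end

section
/- Let F be a relaxed chronology of standard zero forces with completion time K for a zero forcing set B of a graph G, and let N ∈ {0,...,K}. Then: (1) B is a zero forcing set of the induced subgraph H on the vertices active at some time-step in [0,N], with pt(H,B) ≤ N; and (2) the set V^N of vertices active after time-step N is a zero forcing set of the induced subgraph H' on the vertices active at some time-step in [N,K], with pt(H',V^N) ≤ K−N. -/
namespace ZF

variable {V : Type*} [Fintype V] [DecidableEq V]

section Aux

variable {G : SimpleGraph V} {B : Set V} {K : ℕ} {F : ℕ → Set (V × V)}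

lemma expand_succ_eq (B : Set V) (F : ℕ → Set (V × V)) (k : ℕ) :
    expand B F (k + 1) = expand B F k ∪ {v | ∃ u, (u, v) ∈ F (k + 1)} := rfl

lemma expand_mono_s6 (B : Set V) (F : ℕ → Set (V × V)) {j k : ℕ} (h : j ≤ k) :
    expand B F j ⊆ expand B F k := by
  induction k, h using Nat.le_induction with
  | base => exact subset_rfl
  | succ k hjk ih => exact ih.trans (by rw [expand_succ_eq]; exact Set.subset_union_left)

lemma forcer_not_earlier (hF : RelaxedChron (ZFValid G Set.univ) Set.univ B K F)
    {k : ℕ} {u v : V} (hk : k < K) (huv : (u, v) ∈ F (k + 1)) :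
    ∀ j ≤ k, ∀ w, (u, w) ∉ F j := by
  intro j hj w hw
  match j, hj with
  | 0, _ => rw [hF.init] at hw; exact hw
  | m + 1, hj =>
    have hmK : m < K := by omega
    obtain ⟨-, -, -, hwW, -, huniqw⟩ := hF.forcesValid m hmK u w hw
    obtain ⟨-, -, -, hvW, hadjv, -⟩ := hF.forcesValid k hk u v huv
    have hvWm : v ∉ expand B F m := fun h => hvW (expand_mono_s6 B F (by omega) h)
    have hvw : v = w := huniqw v (Set.mem_univ v) hadjv hvWm
    have : w ∈ expand B F (m + 1) := by
      rw [expand_succ_eq]; exact Or.inr ⟨u, hw⟩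
    exact hvW (expand_mono_s6 B F hj (hvw ▸ this))

lemma trunc_main (hF : RelaxedChron (ZFValid G Set.univ) Set.univ B K F)
    (M L : ℕ) (hLK : L ≤ K) :
    ∀ t, M + t ≤ L →
      expand B F (M + t) ∩ {v | ∃ k, M ≤ k ∧ k ≤ L ∧ activeAt B F v k}
        ⊆ iter (ZFValid G {v | ∃ k, M ≤ k ∧ k ≤ L ∧ activeAt B F v k})
            {v | activeAt B F v M} t := by
  set U : Set V := {v | ∃ k, M ≤ k ∧ k ≤ L ∧ activeAt B F v k} with hU
  set valid := ZFValid G U with hvalid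
  intro t
  induction t with
  | zero =>
    rintro _ v ⟨hvE, k, hMk, hkL, hblue, hnof⟩
    show v ∈ {v | activeAt B F v M}
    exact ⟨by simpa using hvE, fun j hj u => hnof j (hj.trans hMk) u⟩
  | succ t ih =>
    intro ht v hv
    have ht' : M + t ≤ L := by omega
    have hiter : iter valid {v | activeAt B F v M} (t + 1)
        = step valid (iter valid {v | activeAt B F v M} t) :=
      Function.iterate_succ_apply' _ _ _
    obtain ⟨hvE, hvU⟩ := hv
    rw [show M + (t + 1) = (M + t) + 1 by omega, expand_succ_eq] at hvE
    rcases hvE with hvE | ⟨u, huF⟩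
    · have := ih ht' ⟨hvE, hvU⟩
      rw [hiter]; exact Or.inl this
    · have hk : M + t < K := by omega
      obtain ⟨-, -, huB, hvW, hadj, huniq⟩ := hF.forcesValid (M + t) hk u v huF
      have huact : activeAt B F u (M + t) :=
        ⟨huB, forcer_not_earlier hF hk huF⟩
      have huU : u ∈ U := ⟨M + t, by omega, by omega, huact⟩
      have huI : u ∈ iter valid {v | activeAt B F v M} t := ih ht' ⟨huB, huU⟩
      by_cases hvI : v ∈ iter valid {v | activeAt B F v M} t
      · rw [hiter]; exact Or.inl hvI
      · rw [hiter]
        refine Or.inr ⟨u, huU, hvU, huI, hvI, hadj, ?_⟩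
        intro w hwU hadjw hwI
        have hwE : w ∉ expand B F (M + t) := fun hwE => hwI (ih ht' ⟨hwE, hwU⟩)
        exact huniq w (Set.mem_univ w) hadjw hwE

lemma trunc_complete (hF : RelaxedChron (ZFValid G Set.univ) Set.univ B K F)
    (M L : ℕ) (hML : M ≤ L) (hLK : L ≤ K) :
    {v | ∃ k, M ≤ k ∧ k ≤ L ∧ activeAt B F v k}
      ⊆ iter (ZFValid G {v | ∃ k, M ≤ k ∧ k ≤ L ∧ activeAt B F v k})
          {v | activeAt B F v M} (L - M) := by
  intro v hv
  have hE : v ∈ expand B F (M + (L - M)) := by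
    obtain ⟨k, hMk, hkL, hblue, -⟩ := hv
    exact expand_mono_s6 B F (by omega) hblue
  exact trunc_main hF M L hLK (L - M) (by omega) ⟨hE, hv⟩

lemma active_zero (hF : RelaxedChron (ZFValid G Set.univ) Set.univ B K F) :
    {v | activeAt B F v 0} = B := by
  ext v
  constructor
  · rintro ⟨h, -⟩; exact h
  · intro h
    refine ⟨h, fun j hj u hu => ?_⟩
    interval_cases j
    rw [hF.init] at hu; exact hu

end Aux

end ZF
/-- Truncations of a relaxed chronology: `B` zero forces the induced subgraph on the
vertices active at some time in `[0,N]` with propagation time at most `N`, and the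
vertices active at time `N` zero force the induced subgraph on the vertices active at
some time in `[N,K]` with propagation time at most `K − N`. -/
theorem truncation {V : Type*} [Fintype V] [DecidableEq V]
    (G : SimpleGraph V) (B : Set V) (K : ℕ) (F : ℕ → Set (V × V))
    (hF : ZF.RelaxedChron (ZF.ZFValid G Set.univ) Set.univ B K F)
    (N : ℕ) (hN : N ≤ K) :
    (ZF.IsForcingSet (ZF.ZFValid G {v : V | ∃ k ≤ N, ZF.activeAt B F v k})
        {v : V | ∃ k ≤ N, ZF.activeAt B F v k} B ∧
      ZF.propTime (ZF.ZFValid G {v : V | ∃ k ≤ N, ZF.activeAt B F v k})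
        {v : V | ∃ k ≤ N, ZF.activeAt B F v k} B ≤ N) ∧
    (ZF.IsForcingSet (ZF.ZFValid G {v : V | ∃ k, N ≤ k ∧ k ≤ K ∧ ZF.activeAt B F v k})
        {v : V | ∃ k, N ≤ k ∧ k ≤ K ∧ ZF.activeAt B F v k} {v : V | ZF.activeAt B F v N} ∧
      ZF.propTime (ZF.ZFValid G {v : V | ∃ k, N ≤ k ∧ k ≤ K ∧ ZF.activeAt B F v k})
        {v : V | ∃ k, N ≤ k ∧ k ≤ K ∧ ZF.activeAt B F v k} {v : V | ZF.activeAt B F v N}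
        ≤ K - N) := by
  have hU1 : {v : V | ∃ k ≤ N, ZF.activeAt B F v k}
      = {v : V | ∃ k, 0 ≤ k ∧ k ≤ N ∧ ZF.activeAt B F v k} := by
    ext v; simp
  constructor
  · rw [hU1]
    have hB0 := ZF.active_zero hF
    have hcomp := ZF.trunc_complete hF 0 N (Nat.zero_le N) hN
    rw [hB0, Nat.sub_zero] at hcomp
    have hBsub : B ⊆ {v : V | ∃ k, 0 ≤ k ∧ k ≤ N ∧ ZF.activeAt B F v k} := by
      intro b hb
      refine ⟨0, le_rfl, Nat.zero_le N, ?_⟩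
      rw [← hB0] at hb; exact hb
    exact ⟨⟨hBsub, N, hcomp⟩, Nat.sInf_le hcomp⟩
  · have hcomp := ZF.trunc_complete hF N K hN le_rfl
    have hBsub : {v : V | ZF.activeAt B F v N}
        ⊆ {v : V | ∃ k, N ≤ k ∧ k ≤ K ∧ ZF.activeAt B F v k} :=
      fun v hv => ⟨N, le_rfl, hN, hv⟩
    exact ⟨⟨hBsub, K - N, hcomp⟩, Nat.sInf_le hcomp⟩
end
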